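/- arXiv:2204.02879 — 7 statements merged into one kernel-verified Lean document; each statement's English description precedes it below -/
import Mathlib

section
/- For any positive integer n, the number of partitions with perimeter n all of whose parts are odd equals the number of partitions with perimeter n all of whose parts are distinct. -/
/-- A partition: a nonempty weakly decreasing list of positive integers. -/
def IsPartition (l : List ℕ) : Prop :=
  l ≠ [] ∧ l.Pairwise (· ≥ ·) ∧ ∀ x ∈ l, 0 < x

/-- The perimeter of a partition: largest part plus number of parts minus 1. -/
def perim (l : List ℕ) : ℕ := l.headI + l.length - 1

/-- Number of repeated parts: indices i with λ_i = λ_{i+1}. -/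
def repStat (l : List ℕ) : ℕ :=
  ((List.range (l.length - 1)).filter fun i => l.getD i 0 = l.getD (i + 1) 0).length

/-- Number of even parts. -/
def evenStat (l : List ℕ) : ℕ := l.countP fun x => x % 2 = 0

/-!
Both counts are the Fibonacci number `F n`. Write a partition as `h :: t`. If all parts are odd,
either `h` equals the largest part of `t`, and dropping `h` lowers the perimeter by 1, or `h`
exceeds it by at least 2, and subtracting 2 from `h` lowers the perimeter by 2. If the parts are
distinct, either `h` is one more than the largest part of `t`, and dropping `h` lowers the
perimeter by 2, or `h` exceeds it by at least 2, and subtracting 1 from `h` lowers the perimeter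
by 1. So both counts satisfy `f (n + 2) = f (n + 1) + f n`, with `f 0 = 0` and `f 1 = 1`.
-/

theorem List.modifyHead_injective {α : Type*} {f : α → α} (hf : Function.Injective f) :
    Function.Injective (List.modifyHead f) := by
  rintro (_ | ⟨a, l⟩) (_ | ⟨b, m⟩) h <;> simp_all [hf.eq_iff]

theorem Set.encard_eq_fib {α : Type*} {S : ℕ → Set α} {f g : α → α} {a : α}
    (hf : f.Injective) (hg : g.Injective) (h0 : S 0 = ∅) (h1 : S 1 = {a})
    (hrec : ∀ n, S (n + 2) = f '' S (n + 1) ∪ g '' S n)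
    (hdisj : ∀ n, Disjoint (f '' S (n + 1)) (g '' S n)) (n : ℕ) :
    (S n).encard = Nat.fib n := by
  induction n using Nat.twoStepInduction with
  | zero => simp [h0]
  | one => simp [h1]
  | more n ih ih' =>
    rw [hrec, encard_union_eq (hdisj n), hf.encard_image, hg.encard_image, ih, ih',
      Nat.fib_add_two, Nat.cast_add, add_comm]

theorem perim_cons (h : ℕ) (t : List ℕ) : perim (h :: t) = h + t.length := by
  simp [perim]

/-- `t.headI` is `0` when `t = []`, which makes the middle condition vacuous there. -/
theorem isPartition_cons_iff {h : ℕ} {t : List ℕ} :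
    IsPartition (h :: t) ↔ 0 < h ∧ t.headI ≤ h ∧ (t = [] ∨ IsPartition t) := by
  rcases t with _ | ⟨a, s⟩
  · simp [IsPartition]
  · simp only [IsPartition, List.pairwise_cons, List.mem_cons, List.headI_cons, ne_eq,
      reduceCtorEq, not_false_eq_true, true_and, false_or]
    constructor
    · rintro ⟨⟨hh, hs, has⟩, hpos⟩
      exact ⟨hpos h (.inl rfl), hh a (.inl rfl), ⟨hs, has⟩, fun x hx => hpos x (.inr hx)⟩
    · rintro ⟨hh, hah, ⟨hs, has⟩, hpos⟩
      refine ⟨⟨?_, hs, has⟩, ?_⟩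
      · rintro x (rfl | hx)
        exacts [hah, (hs x hx).trans hah]
      · rintro x (rfl | hx)
        exacts [hh, hpos x hx]

theorem IsPartition.nodup_cons_iff {h : ℕ} {t : List ℕ} (hl : IsPartition (h :: t)) :
    (h :: t).Nodup ↔ t.headI < h ∧ t.Nodup := by
  obtain ⟨hh, hth, ht⟩ := isPartition_cons_iff.mp hl
  rcases t with _ | ⟨a, s⟩
  · simpa using hh
  · have has : ∀ x ∈ s, x ≤ a := (List.pairwise_cons.mp (List.pairwise_cons.mp hl.2.1).2).1
    rw [List.nodup_cons, List.headI_cons, List.mem_cons]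
    constructor
    · rintro ⟨hne, hnd⟩
      exact ⟨lt_of_le_of_ne hth fun he => hne (.inl he.symm), hnd⟩
    · rintro ⟨hlt, hnd⟩
      refine ⟨?_, hnd⟩
      rintro (rfl | hx)
      exacts [lt_irrefl _ hlt, (has h hx).not_gt hlt]

theorem IsPartition.eq_singleton_of_perim_le_one {l : List ℕ} (hl : IsPartition l)
    (hper : perim l ≤ 1) : l = [1] := by
  obtain ⟨h, t, rfl⟩ := List.exists_cons_of_ne_nil hl.1
  have hh := (isPartition_cons_iff.mp hl).1
  rw [perim_cons] at hper
  have ht : t = [] := List.length_eq_zero_iff.mp (by omega)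
  rw [ht, show h = 1 by omega]

def oddPartitions (n : ℕ) : Set (List ℕ) :=
  {l | IsPartition l ∧ perim l = n ∧ ∀ x ∈ l, Odd x}

theorem oddPartitions_zero : oddPartitions 0 = ∅ :=
  Set.eq_empty_of_forall_notMem fun _ ⟨hl, hper, _⟩ => by
    rw [hl.eq_singleton_of_perim_le_one (by omega)] at hper
    exact one_ne_zero hper

theorem oddPartitions_one : oddPartitions 1 = {[1]} := by
  ext l
  refine ⟨fun ⟨hl, hper, _⟩ => hl.eq_singleton_of_perim_le_one hper.le, ?_⟩
  rintro rfl
  exact ⟨⟨by simp, by simp, by simp⟩, rfl, by simp⟩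

theorem cons_headI_mem_oddPartitions {n : ℕ} {t : List ℕ} (ht : t ∈ oddPartitions n) :
    t.headI :: t ∈ oddPartitions (n + 1) := by
  obtain ⟨hpart, hper, hodd⟩ := ht
  obtain ⟨a, s, rfl⟩ := List.exists_cons_of_ne_nil hpart.1
  refine ⟨isPartition_cons_iff.mpr ⟨hpart.2.2 a (.head _), le_rfl, .inr hpart⟩, ?_, ?_⟩
  · rw [perim_cons] at hper ⊢
    simp only [List.headI_cons, List.length_cons] at hper ⊢
    omega
  · exact List.forall_mem_cons.mpr ⟨hodd a (.head _), hodd⟩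

theorem modifyHead_mem_oddPartitions {n : ℕ} {l : List ℕ} (hl : l ∈ oddPartitions n) :
    l.modifyHead (· + 2) ∈ oddPartitions (n + 2) := by
  obtain ⟨hpart, hper, hodd⟩ := hl
  obtain ⟨h, t, rfl⟩ := List.exists_cons_of_ne_nil hpart.1
  obtain ⟨hh, hth, ht⟩ := isPartition_cons_iff.mp hpart
  rw [List.forall_mem_cons] at hodd
  rw [List.modifyHead_cons]
  refine ⟨isPartition_cons_iff.mpr ⟨by omega, by omega, ht⟩, ?_, ?_⟩
  · rw [perim_cons] at hper ⊢
    omega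
  · exact List.forall_mem_cons.mpr ⟨hodd.1.add_even even_two, hodd.2⟩

theorem oddPartitions_add_two (n : ℕ) :
    oddPartitions (n + 2) = (fun t => t.headI :: t) '' oddPartitions (n + 1) ∪
      List.modifyHead (· + 2) '' oddPartitions n := by
  refine subset_antisymm (fun l hl => ?_) (Set.union_subset
    (Set.image_subset_iff.mpr fun _ => cons_headI_mem_oddPartitions)
    (Set.image_subset_iff.mpr fun _ => modifyHead_mem_oddPartitions))
  obtain ⟨hpart, hper, hodd⟩ := hl
  obtain ⟨h, t, rfl⟩ := List.exists_cons_of_ne_nil hpart.1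
  obtain ⟨hh, hth, ht⟩ := isPartition_cons_iff.mp hpart
  rw [perim_cons] at hper
  rw [List.forall_mem_cons] at hodd
  rcases hth.eq_or_lt with heq | hlt
  · have htne : t ≠ [] := by
      rintro rfl
      exact hh.ne heq
    refine .inl ⟨t, ⟨ht.resolve_left htne, ?_, hodd.2⟩, by simp only [heq]⟩
    unfold perim
    omega
  · -- `h` and `t.headI` are both odd, unless `t = []`, where `h = n + 2` is odd, hence `≥ 3`.
    have hgap : t.headI + 2 ≤ h := by
      obtain ⟨k, rfl⟩ := hodd.1
      rcases t with _ | ⟨a, s⟩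
      · simp only [List.headI_nil, Nat.default_eq_zero, List.length_nil] at hper ⊢
        omega
      · obtain ⟨j, rfl⟩ := hodd.2 a (.head _)
        simp only [List.headI_cons] at hlt ⊢
        omega
    have hodd' : Odd (h - 2) := Nat.Odd.sub_even (by omega) hodd.1 even_two
    refine .inr ⟨(h - 2) :: t, ⟨isPartition_cons_iff.mpr ⟨hodd'.pos, by omega, ht⟩, ?_,
      List.forall_mem_cons.mpr ⟨hodd', hodd.2⟩⟩, ?_⟩
    · rw [perim_cons]
      omega
    · rw [List.modifyHead_cons, Nat.sub_add_cancel (by omega)]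

theorem disjoint_oddPartitions_add_two (n : ℕ) :
    Disjoint ((fun t => t.headI :: t) '' oddPartitions (n + 1))
      (List.modifyHead (· + 2) '' oddPartitions n) := by
  rw [Set.disjoint_left]
  rintro _ ⟨t, -, rfl⟩ ⟨l, ⟨hpart, -, -⟩, hl⟩
  obtain ⟨h, s, rfl⟩ := List.exists_cons_of_ne_nil hpart.1
  obtain ⟨hhead, rfl⟩ := List.cons_eq_cons.mp hl
  beta_reduce at hhead
  have := (isPartition_cons_iff.mp hpart).2.1
  omega

theorem encard_oddPartitions (n : ℕ) : (oddPartitions n).encard = Nat.fib n :=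
  Set.encard_eq_fib (f := fun t => t.headI :: t) (fun _ _ h => (List.cons_eq_cons.mp h).2)
    (List.modifyHead_injective (add_left_injective 2)) oddPartitions_zero oddPartitions_one
    oddPartitions_add_two disjoint_oddPartitions_add_two n

def distinctPartitions (n : ℕ) : Set (List ℕ) :=
  {l | IsPartition l ∧ perim l = n ∧ l.Nodup}

theorem distinctPartitions_zero : distinctPartitions 0 = ∅ :=
  Set.eq_empty_of_forall_notMem fun _ ⟨hl, hper, _⟩ => by
    rw [hl.eq_singleton_of_perim_le_one (by omega)] at hper
    exact one_ne_zero hper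

theorem distinctPartitions_one : distinctPartitions 1 = {[1]} := by
  ext l
  refine ⟨fun ⟨hl, hper, _⟩ => hl.eq_singleton_of_perim_le_one hper.le, ?_⟩
  rintro rfl
  exact ⟨⟨by simp, by simp, by simp⟩, rfl, by simp⟩

theorem modifyHead_mem_distinctPartitions {n : ℕ} {l : List ℕ}
    (hl : l ∈ distinctPartitions n) : l.modifyHead (· + 1) ∈ distinctPartitions (n + 1) := by
  obtain ⟨hpart, hper, hnd⟩ := hl
  obtain ⟨h, t, rfl⟩ := List.exists_cons_of_ne_nil hpart.1
  obtain ⟨hth, hnd⟩ := hpart.nodup_cons_iff.mp hnd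
  have hpart' : IsPartition ((h + 1) :: t) :=
    isPartition_cons_iff.mpr ⟨by omega, by omega, (isPartition_cons_iff.mp hpart).2.2⟩
  rw [List.modifyHead_cons]
  refine ⟨hpart', ?_, hpart'.nodup_cons_iff.mpr ⟨by omega, hnd⟩⟩
  rw [perim_cons] at hper ⊢
  omega

theorem cons_headI_add_one_mem_distinctPartitions {n : ℕ} {t : List ℕ}
    (ht : t ∈ distinctPartitions n) : (t.headI + 1) :: t ∈ distinctPartitions (n + 2) := by
  obtain ⟨hpart, hper, hnd⟩ := ht
  obtain ⟨a, s, rfl⟩ := List.exists_cons_of_ne_nil hpart.1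
  have hpart' : IsPartition ((a + 1) :: a :: s) :=
    isPartition_cons_iff.mpr ⟨by omega, by simp, .inr hpart⟩
  refine ⟨hpart', ?_, hpart'.nodup_cons_iff.mpr ⟨by simp, hnd⟩⟩
  rw [perim_cons] at hper ⊢
  simp only [List.headI_cons, List.length_cons]
  omega

theorem distinctPartitions_add_two (n : ℕ) :
    distinctPartitions (n + 2) = List.modifyHead (· + 1) '' distinctPartitions (n + 1) ∪
      (fun t => (t.headI + 1) :: t) '' distinctPartitions n := by
  refine subset_antisymm (fun l hl => ?_) (Set.union_subset
    (Set.image_subset_iff.mpr fun _ => modifyHead_mem_distinctPartitions)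
    (Set.image_subset_iff.mpr fun _ => cons_headI_add_one_mem_distinctPartitions))
  obtain ⟨hpart, hper, hnd⟩ := hl
  obtain ⟨h, t, rfl⟩ := List.exists_cons_of_ne_nil hpart.1
  obtain ⟨hh, -, ht⟩ := isPartition_cons_iff.mp hpart
  obtain ⟨hth, hnd⟩ := hpart.nodup_cons_iff.mp hnd
  rw [perim_cons] at hper
  rcases (show t.headI + 1 ≤ h from hth).lt_or_eq with hgap | heq
  · have hpart' : IsPartition ((h - 1) :: t) :=
      isPartition_cons_iff.mpr ⟨by omega, by omega, ht⟩
    refine .inl ⟨(h - 1) :: t,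
      ⟨hpart', ?_, hpart'.nodup_cons_iff.mpr ⟨by omega, hnd⟩⟩, ?_⟩
    · rw [perim_cons]
      omega
    · rw [List.modifyHead_cons, Nat.sub_add_cancel hh]
  · have htne : t ≠ [] := by
      rintro rfl
      simp only [List.headI_nil, Nat.default_eq_zero, List.length_nil] at heq hper
      omega
    refine .inr ⟨t, ⟨ht.resolve_left htne, ?_, hnd⟩, by simp only [heq]⟩
    unfold perim
    omega

theorem disjoint_distinctPartitions_add_two (n : ℕ) :
    Disjoint (List.modifyHead (· + 1) '' distinctPartitions (n + 1))
      ((fun t => (t.headI + 1) :: t) '' distinctPartitions n) := by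
  rw [Set.disjoint_left]
  rintro _ ⟨l, ⟨hpart, -, hnd⟩, rfl⟩ ⟨t, -, ht⟩
  obtain ⟨h, s, rfl⟩ := List.exists_cons_of_ne_nil hpart.1
  obtain ⟨hhead, rfl⟩ := List.cons_eq_cons.mp ht
  have := (hpart.nodup_cons_iff.mp hnd).1
  beta_reduce at hhead
  omega

theorem encard_distinctPartitions (n : ℕ) : (distinctPartitions n).encard = Nat.fib n :=
  Set.encard_eq_fib (List.modifyHead_injective (add_left_injective 1))
    (g := fun t => (t.headI + 1) :: t) (fun _ _ h => (List.cons_eq_cons.mp h).2)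
    distinctPartitions_zero distinctPartitions_one distinctPartitions_add_two
    disjoint_distinctPartitions_add_two n

theorem odd_eq_distinct_perimeter_general (n : ℕ) :
    {l : List ℕ | IsPartition l ∧ perim l = n ∧ ∀ x ∈ l, Odd x}.ncard =
    {l : List ℕ | IsPartition l ∧ perim l = n ∧ l.Nodup}.ncard :=
  congrArg ENat.toNat ((encard_oddPartitions n).trans (encard_distinctPartitions n).symm)

theorem odd_eq_distinct_perimeter (n : ℕ) (hn : 1 ≤ n) :
    {l : List ℕ | IsPartition l ∧ perim l = n ∧ ∀ x ∈ l, Odd x}.ncard =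
    {l : List ℕ | IsPartition l ∧ perim l = n ∧ l.Nodup}.ncard :=
  odd_eq_distinct_perimeter_general n
end

section
/- For any positive integers n and d, the number of partitions with perimeter n all of whose parts are congruent to 1 modulo d+1 equals the number of partitions with perimeter n in which any two consecutive parts differ by at least d. -/
open List Set

lemma IsPartition.headI_pos {l : List ℕ} (h : IsPartition l) : 0 < l.headI := by
  obtain ⟨hne, -, hpos⟩ := h
  cases l with
  | nil => exact absurd rfl hne
  | cons x l => exact hpos x mem_cons_self

lemma isPartition_iff_isChain {l : List ℕ} :
    IsPartition l ↔ l ≠ [] ∧ l.IsChain (· ≥ ·) ∧ ∀ x ∈ l, 0 < x := by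
  rw [IsPartition, isChain_iff_pairwise]

lemma isChain_iff_forall_getD {α : Type*} {R : α → α → Prop} {l : List α} (a : α) :
    l.IsChain R ↔ ∀ i, i + 1 < l.length → R (l.getD i a) (l.getD (i + 1) a) := by
  rw [isChain_iff_getElem]
  refine forall_congr' fun i => ⟨fun h hi => ?_, fun h hi => ?_⟩ <;>
  · have := h hi
    rwa [getD_eq_getElem _ _ (by omega), getD_eq_getElem _ _ hi] at *

lemma headI_map {α β : Type*} [Inhabited α] [Inhabited β] {f : α → β} {l : List α} (h : l ≠ []) :
    (l.map f).headI = f l.headI := by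
  cases l with
  | nil => exact absurd rfl h
  | cons x l => rfl

section Conjugate

open YoungDiagram

def conj (l : List ℕ) : List ℕ :=
  if h : l.SortedGE then (ofRowLens l h).transpose.rowLens else []

variable {l : List ℕ}

lemma conj_of_sortedGE (h : l.SortedGE) : conj l = (ofRowLens l h).transpose.rowLens :=
  dif_pos h

lemma length_conj (h : IsPartition l) : (conj l).length = l.headI := by
  rw [conj_of_sortedGE (sortedGE_iff_pairwise.2 h.2.1), length_rowLens, colLen_transpose]
  obtain ⟨x, t, rfl⟩ := exists_cons_of_ne_nil h.1
  exact rowLen_ofRowLens (w := x :: t) ⟨0, by simp⟩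

lemma isPartition_conj (h : IsPartition l) : IsPartition (conj l) := by
  rw [conj_of_sortedGE (sortedGE_iff_pairwise.2 h.2.1)]
  refine ⟨?_, sortedGE_iff_pairwise.1 (rowLens_sorted _), pos_of_mem_rowLens _⟩
  rw [← conj_of_sortedGE, ← length_pos_iff, length_conj h]
  exact h.headI_pos

lemma conj_conj (h : IsPartition l) : conj (conj l) = l := by
  have hs : l.SortedGE := sortedGE_iff_pairwise.2 h.2.1
  rw [conj_of_sortedGE hs, conj_of_sortedGE (rowLens_sorted _), ofRowLens_to_rowLens_eq_self,
    transpose_transpose, rowLens_ofRowLens_eq_self h.2.2]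

lemma headI_conj (h : IsPartition l) : (conj l).headI = l.length := by
  rw [← length_conj (isPartition_conj h), conj_conj h]

lemma bijOn_conj (P : ℕ → ℕ → Prop) :
    BijOn conj {a | IsPartition a ∧ P a.headI a.length}
      {c | IsPartition c ∧ P c.length c.headI} := by
  refine InvOn.bijOn ⟨fun a ha => conj_conj ha.1, fun c hc => conj_conj hc.1⟩ ?_ ?_
  · rintro a ⟨ha, hP⟩
    exact ⟨isPartition_conj ha, by rwa [length_conj ha, headI_conj ha]⟩
  · rintro c ⟨hc, hP⟩
    exact ⟨isPartition_conj hc, by rwa [length_conj hc, headI_conj hc]⟩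

end Conjugate

section Staircase

variable (d : ℕ)

def stair : List ℕ → List ℕ
  | [] => []
  | x :: c => (x + d * c.length) :: stair c

def unstair : List ℕ → List ℕ
  | [] => []
  | x :: l => (x - d * l.length) :: unstair l

abbrev IsGapChain (l : List ℕ) : Prop := l.IsChain fun a b => b + d ≤ a

variable {d}

@[simp]
lemma length_stair (c : List ℕ) : (stair d c).length = c.length := by
  induction c with
  | nil => rfl
  | cons x c ih => simp [stair, ih]

@[simp]
lemma length_unstair (l : List ℕ) : (unstair d l).length = l.length := by
  induction l with
  | nil => rfl
  | cons x l ih => simp [unstair, ih]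

lemma headI_stair (c : List ℕ) : (stair d c).headI = c.headI + d * (c.length - 1) := by
  cases c <;> simp [stair]

lemma unstair_stair (c : List ℕ) : unstair d (stair d c) = c := by
  induction c with
  | nil => rfl
  | cons x c ih => simp [stair, unstair, ih]

lemma isGapChain_stair : ∀ {c : List ℕ}, c.IsChain (· ≥ ·) → IsGapChain d (stair d c)
  | [], _ => .nil
  | [_], _ => .singleton _
  | x :: y :: c, h => by
    rw [isChain_cons_cons] at h
    have ih := isGapChain_stair h.2
    simp only [stair, length_cons] at ih ⊢
    refine isChain_cons_cons.2 ⟨?_, ih⟩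
    rw [mul_add_one]
    omega

lemma pos_of_mem_stair {c : List ℕ} (hpos : ∀ x ∈ c, 0 < x) : ∀ y ∈ stair d c, 0 < y := by
  induction c with
  | nil => simp [stair]
  | cons x c ih =>
    simp only [stair, mem_cons, forall_eq_or_imp] at hpos ⊢
    exact ⟨by omega, ih hpos.2⟩

lemma IsGapChain.mul_length_add_one_le :
    ∀ {x : ℕ} {l : List ℕ}, IsGapChain d (x :: l) → (∀ y ∈ x :: l, 0 < y) →
      d * l.length + 1 ≤ x
  | x, [], _, hpos => by
    rw [length_nil, mul_zero, zero_add]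
    exact hpos x mem_cons_self
  | x, y :: l, h, hpos => by
    rw [IsGapChain, isChain_cons_cons] at h
    have := IsGapChain.mul_length_add_one_le h.2 fun z hz => hpos z (mem_cons_of_mem x hz)
    rw [length_cons, mul_add_one]
    omega

lemma stair_unstair : ∀ {l : List ℕ}, IsGapChain d l → (∀ y ∈ l, 0 < y) →
    stair d (unstair d l) = l
  | [], _, _ => rfl
  | x :: l, h, hpos => by
    have hx := h.mul_length_add_one_le hpos
    have ih : stair d (unstair d l) = l :=
      stair_unstair h.tail fun y hy => hpos y (mem_cons_of_mem x hy)
    simp only [unstair, stair, length_unstair, ih]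
    congr 1
    omega

lemma isChain_unstair : ∀ {l : List ℕ}, IsGapChain d l → (∀ y ∈ l, 0 < y) →
    (unstair d l).IsChain (· ≥ ·)
  | [], _, _ => .nil
  | [_], _, _ => .singleton _
  | x :: y :: l, h, hpos => by
    have hpos' : ∀ z ∈ y :: l, 0 < z := fun z hz => hpos z (mem_cons_of_mem x hz)
    have hy := IsGapChain.mul_length_add_one_le h.tail hpos'
    have ih := isChain_unstair h.tail hpos'
    rw [IsGapChain, isChain_cons_cons] at h
    simp only [unstair, length_cons] at ih ⊢
    refine isChain_cons_cons.2 ⟨?_, ih⟩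
    rw [mul_add_one]
    omega

lemma pos_of_mem_unstair : ∀ {l : List ℕ}, IsGapChain d l → (∀ y ∈ l, 0 < y) →
    ∀ z ∈ unstair d l, 0 < z
  | [], _, _ => by simp [unstair]
  | x :: l, h, hpos => by
    have hx := h.mul_length_add_one_le hpos
    simp only [unstair, mem_cons, forall_eq_or_imp]
    exact ⟨by omega, pos_of_mem_unstair h.tail fun y hy => hpos y (mem_cons_of_mem x hy)⟩

lemma bijOn_stair (d n : ℕ) :
    BijOn (stair d) {c | IsPartition c ∧ (d + 1) * (c.length - 1) + c.headI = n}
      {l | IsPartition l ∧ perim l = n ∧ IsGapChain d l} := by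
  refine InvOn.bijOn ⟨fun c _ => unstair_stair c, fun l hl => stair_unstair hl.2.2 hl.1.2.2⟩ ?_ ?_
  · rintro c ⟨hc, rfl⟩
    have hlen : 0 < c.length := length_pos_iff.2 hc.1
    have hgap := isGapChain_stair (d := d) (isPartition_iff_isChain.1 hc).2.1
    refine ⟨isPartition_iff_isChain.2 ⟨?_, hgap.imp fun a b h => ?_, pos_of_mem_stair hc.2.2⟩, ?_,
      hgap⟩
    · rw [← length_pos_iff, length_stair]
      exact hlen
    · omega
    · rw [perim, headI_stair, length_stair, add_one_mul]
      omega
  · rintro l ⟨hl, rfl, hgap⟩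
    have hlen : 0 < l.length := length_pos_iff.2 hl.1
    have hhead := headI_stair (d := d) (unstair d l)
    rw [stair_unstair hgap hl.2.2, length_unstair] at hhead
    refine ⟨isPartition_iff_isChain.2 ⟨?_, isChain_unstair hgap hl.2.2,
      pos_of_mem_unstair hgap hl.2.2⟩, ?_⟩
    · rw [← length_pos_iff, length_unstair]
      exact hlen
    · rw [perim, length_unstair, add_one_mul]
      omega

end Staircase

section Expand

variable {m : ℕ}

lemma mul_sub_one_add_one_div (hm : 1 < m) {y : ℕ} (hy : 0 < y) :
    (m * (y - 1) + 1) / m + 1 = y := by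
  rw [Nat.mul_add_div (by omega), Nat.div_eq_of_lt hm]
  omega

lemma mul_div_add_one_of_mod_eq_one {x : ℕ} (h : x % m = 1) : m * (x / m) + 1 = x := by
  rw [← h, Nat.div_add_mod]

lemma bijOn_map_mul_sub_one_add_one (hm : 1 < m) (n : ℕ) :
    BijOn (map fun y => m * (y - 1) + 1) {a | IsPartition a ∧ m * (a.headI - 1) + a.length = n}
      {l | IsPartition l ∧ perim l = n ∧ ∀ x ∈ l, x % m = 1} := by
  refine InvOn.bijOn (f' := map fun x => x / m + 1) ⟨fun a ha => ?_, fun l hl => ?_⟩ ?_ ?_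
  · rw [map_map]
    refine (map_congr_left fun y hy => ?_).trans (map_id' a)
    exact mul_sub_one_add_one_div hm (ha.1.2.2 y hy)
  · rw [map_map]
    refine (map_congr_left fun x hx => ?_).trans (map_id' l)
    simpa using mul_div_add_one_of_mod_eq_one (hl.2.2 x hx)
  · rintro a ⟨ha, rfl⟩
    have hhead := ha.headI_pos
    obtain ⟨hne, hs, -⟩ := ha
    refine ⟨⟨by simpa using hne, hs.map _ fun y z hyz => ?_, by simp⟩, ?_, ?_⟩
    · exact Nat.add_le_add_right (Nat.mul_le_mul_left m (Nat.sub_le_sub_right hyz 1)) 1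
    · rw [perim, headI_map hne, length_map]
      omega
    · simp only [mem_map, forall_exists_index, and_imp, forall_apply_eq_imp_iff₂]
      intro y _
      rw [Nat.mul_add_mod, Nat.mod_eq_of_lt hm]
  · rintro l ⟨⟨hne, hs, -⟩, rfl, hmod⟩
    obtain ⟨x, t, rfl⟩ := exists_cons_of_ne_nil hne
    have hx := mul_div_add_one_of_mod_eq_one (hmod x mem_cons_self)
    refine ⟨⟨by simp, hs.map _ fun a b hab => ?_, by simp⟩, ?_⟩
    · exact Nat.add_le_add_right (Nat.div_le_div_right hab) 1
    · rw [perim, headI_map hne, length_map, headI_cons, Nat.add_sub_cancel]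
      omega

end Expand

theorem fu_tang_perimeter_general (n d : ℕ) (hd : 1 ≤ d) :
    {l : List ℕ | IsPartition l ∧ perim l = n ∧ ∀ x ∈ l, x % (d + 1) = 1}.ncard =
    {l : List ℕ | IsPartition l ∧ perim l = n ∧
      ∀ i, i + 1 < l.length → l.getD (i + 1) 0 + d ≤ l.getD i 0}.ncard := by
  simp_rw [← isChain_iff_forall_getD (R := fun a b => b + d ≤ a)]
  calc _ = {a | IsPartition a ∧ (d + 1) * (a.headI - 1) + a.length = n}.ncard :=
        (bijOn_map_mul_sub_one_add_one (by omega) n).ncard_eq.symm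
    _ = {c | IsPartition c ∧ (d + 1) * (c.length - 1) + c.headI = n}.ncard :=
        (bijOn_conj fun k ℓ => (d + 1) * (k - 1) + ℓ = n).ncard_eq
    _ = _ := (bijOn_stair d n).ncard_eq

theorem fu_tang_perimeter (n d : ℕ) (hn : 1 ≤ n) (hd : 1 ≤ d) :
    {l : List ℕ | IsPartition l ∧ perim l = n ∧ ∀ x ∈ l, x % (d + 1) = 1}.ncard =
    {l : List ℕ | IsPartition l ∧ perim l = n ∧
      ∀ i, i + 1 < l.length → l.getD (i + 1) 0 + d ≤ l.getD i 0}.ncard :=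
  fu_tang_perimeter_general n d hd
end

section
/- For every positive integer n and every nonnegative integer k, the number of partitions with perimeter n having exactly k repeated parts equals the number of partitions with perimeter n having exactly k even parts. -/
/-!
A partition with perimeter `n` is determined by its boundary path, read from the smallest part
upwards: a letter `false` widens the current column by one, a letter `true` records a part of the
current width. The path starts at width `1` and its last letter is the `true` of the largest part,
so the partitions with perimeter `n` correspond exactly to the free words `w` of length `n - 1`.
A repeated part is a letter `true` preceded by `true`; an even part is a letter `true` preceded
by an odd number of `false`s. Sending each letter `a` of `w` to `prev == a`, where `prev` is the
letter before it (initially `false`), turns the first statistic into the second: in the image,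
the parity of the number of `false`s read so far records the previous letter of `w`.
-/

def wordParts : ℕ → List Bool → List ℕ
  | _, [] => []
  | h, false :: w => wordParts (h + 1) w
  | h, true :: w => h :: wordParts h w

def partitionOfWord (w : List Bool) : List ℕ := (wordParts 1 (w ++ [true])).reverse

def wordOfParts : ℕ → List ℕ → List Bool
  | _, [] => []
  | h, a :: t => List.replicate (a - h) false ++ true :: wordOfParts a t

def adjTrueCount : Bool → List Bool → ℕ
  | _, [] => 0
  | s, a :: w => (s && a).toNat + adjTrueCount a w

/-- The flag `s` tells whether the current width is even. -/
def evenTrueCount : Bool → List Bool → ℕ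
  | _, [] => 0
  | s, false :: w => evenTrueCount (!s) w
  | s, true :: w => s.toNat + evenTrueCount s w

def xnorWord : Bool → List Bool → List Bool
  | _, [] => []
  | s, a :: w => (s == a) :: xnorWord a w

def unxnorWord : Bool → List Bool → List Bool
  | _, [] => []
  | s, b :: w => (s == b) :: unxnorWord (s == b) w

theorem repStat_cons (a : ℕ) (t : List ℕ) :
    repStat (a :: t) = (if t.head? = some a then 1 else 0) + repStat t := by
  rcases t with _ | ⟨b, t⟩
  · rfl
  unfold repStat
  simp only [List.length_cons, Nat.add_sub_cancel]
  rw [List.range_succ_eq_map, List.filter_cons, List.filter_map]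
  by_cases hab : a = b <;> simp [hab, eq_comm, Function.comp_def, Nat.add_comm]

theorem repStat_concat (l : List ℕ) (x : ℕ) :
    repStat (l ++ [x]) = repStat l + if l.getLast? = some x then 1 else 0 := by
  induction l with
  | nil => rfl
  | cons a t ih =>
    rw [List.cons_append, repStat_cons, ih, repStat_cons]
    rcases t with _ | ⟨b, t⟩ <;> simp [eq_comm, add_comm, add_left_comm, add_assoc]

theorem repStat_reverse (l : List ℕ) : repStat l.reverse = repStat l := by
  induction l with
  | nil => rfl
  | cons a t ih =>
    rw [List.reverse_cons, repStat_concat, ih, List.getLast?_reverse, repStat_cons]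
    omega

section wordParts

variable {h : ℕ}

theorem le_of_mem_wordParts {v : List Bool} {x : ℕ} (hx : x ∈ wordParts h v) : h ≤ x := by
  induction v generalizing h with
  | nil => simp [wordParts] at hx
  | cons a v ih =>
    cases a with
    | false => exact (ih hx).trans' (Nat.le_succ h)
    | true =>
      rcases List.mem_cons.mp hx with rfl | hx
      exacts [le_rfl, ih hx]

theorem pairwise_wordParts (v : List Bool) : (wordParts h v).Pairwise (· ≤ ·) := by
  induction v generalizing h with
  | nil => exact List.Pairwise.nil
  | cons a v ih =>
    cases a with
    | false => exact ih
    | true => exact .cons (fun _ => le_of_mem_wordParts) ih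

theorem length_wordParts (v : List Bool) : (wordParts h v).length = v.count true := by
  induction v generalizing h with
  | nil => rfl
  | cons a v ih => cases a <;> simp [wordParts, ih]

theorem exists_wordParts_append_true_eq_concat (w : List Bool) :
    ∃ y, wordParts h (w ++ [true]) = y ++ [h + w.count false] := by
  induction w generalizing h with
  | nil => exact ⟨[], rfl⟩
  | cons a w ih =>
    cases a with
    | false =>
      obtain ⟨y, hy⟩ := ih (h := h + 1)
      exact ⟨y, by simp [wordParts, hy, Nat.add_assoc, Nat.add_comm 1]⟩
    | true =>
      obtain ⟨y, hy⟩ := ih (h := h)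
      exact ⟨h :: y, by simp [wordParts, hy]⟩

theorem head?_wordParts_eq_some_iff (v : List Bool) :
    (wordParts h v).head? = some h ↔ v.head? = some true := by
  rcases v with _ | ⟨_ | _, v⟩
  · simp [wordParts]
  · simp only [wordParts, List.head?_cons, Option.some.injEq, Bool.false_eq_true, iff_false]
    intro hv
    have := le_of_mem_wordParts (List.mem_of_head? hv)
    omega
  · simp [wordParts]

theorem wordParts_replicate_false_append (d : ℕ) (v : List Bool) :
    wordParts h (List.replicate d false ++ v) = wordParts (h + d) v := by
  induction d generalizing h with
  | zero => rfl
  | succ d ih =>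
    rw [List.replicate_succ, List.cons_append, wordParts, ih, Nat.add_right_comm, Nat.add_assoc]

theorem wordParts_wordOfParts {t : List ℕ} (ht : (h :: t).Pairwise (· ≤ ·)) :
    wordParts h (wordOfParts h t) = t := by
  induction t generalizing h with
  | nil => rfl
  | cons a t ih =>
    obtain ⟨hle, ht⟩ := List.pairwise_cons.mp ht
    rw [wordOfParts, wordParts_replicate_false_append, Nat.add_sub_cancel' (hle a (by simp)),
      wordParts, ih ht]

theorem exists_wordOfParts_eq_append_true (a : ℕ) (t : List ℕ) :
    ∃ w, wordOfParts h (a :: t) = w ++ [true] := by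
  induction t generalizing h a with
  | nil => exact ⟨List.replicate (a - h) false, rfl⟩
  | cons b t ih =>
    obtain ⟨w, hw⟩ := ih (h := a) b
    exact ⟨List.replicate (a - h) false ++ true :: w, by simp [wordOfParts, ← hw]⟩

theorem wordOfParts_cons_of_lt {a : ℕ} (t : List ℕ) (ha : h < a) :
    wordOfParts h (a :: t) = false :: wordOfParts (h + 1) (a :: t) := by
  obtain ⟨d, rfl⟩ := Nat.exists_eq_add_of_lt ha
  simp only [wordOfParts, show h + d + 1 - h = d + 1 by omega,
    show h + d + 1 - (h + 1) = d by omega, List.replicate_succ, List.cons_append]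

theorem wordOfParts_wordParts (w : List Bool) :
    wordOfParts h (wordParts h (w ++ [true])) = w ++ [true] := by
  induction w generalizing h with
  | nil => simp [wordParts, wordOfParts]
  | cons a w ih =>
    cases a with
    | false =>
      obtain ⟨y, hy⟩ := exists_wordParts_append_true_eq_concat (h := h + 1) w
      rcases hbt : wordParts (h + 1) (w ++ [true]) with _ | ⟨b, t⟩
      · simp [hbt] at hy
      have hb : h + 1 ≤ b := le_of_mem_wordParts (hbt ▸ List.mem_cons_self)
      rw [List.cons_append, wordParts, hbt, wordOfParts_cons_of_lt t hb, ← hbt, ih]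
    | true => simp [wordParts, wordOfParts, ih]

theorem wordParts_append_true_injective :
    Function.Injective fun w : List Bool => wordParts h (w ++ [true]) := by
  refine Function.LeftInverse.injective (g := fun l => (wordOfParts h l).dropLast) fun w => ?_
  simp only [wordOfParts_wordParts, List.dropLast_concat]

theorem adjTrueCount_true (v : List Bool) :
    adjTrueCount true v = (if v.head? = some true then 1 else 0) + adjTrueCount false v := by
  rcases v with _ | ⟨_ | _, v⟩ <;> simp [adjTrueCount]

theorem repStat_wordParts (v : List Bool) : repStat (wordParts h v) = adjTrueCount false v := by
  induction v generalizing h with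
  | nil => rfl
  | cons a v ih =>
    cases a with
    | false => simpa [wordParts, adjTrueCount] using ih
    | true =>
      simp only [wordParts, repStat_cons, head?_wordParts_eq_some_iff, ih, adjTrueCount,
        adjTrueCount_true]
      simp

theorem countP_even_wordParts (v : List Bool) :
    (wordParts h v).countP (fun x => x % 2 = 0) = evenTrueCount (decide (h % 2 = 0)) v := by
  induction v generalizing h with
  | nil => rfl
  | cons a v ih =>
    cases a with
    | false =>
      rw [wordParts, ih, evenTrueCount]
      congr 1
      rcases Nat.mod_two_eq_zero_or_one h with hp | hp <;>
        simp [hp, Nat.succ_mod_two_eq_zero_iff]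
    | true =>
      rw [wordParts, List.countP_cons, ih, evenTrueCount]
      by_cases hp : h % 2 = 0 <;> simp [hp, add_comm]

end wordParts

theorem isPartition_partitionOfWord (w : List Bool) : IsPartition (partitionOfWord w) := by
  obtain ⟨y, hy⟩ := exists_wordParts_append_true_eq_concat (h := 1) w
  refine ⟨by simp [partitionOfWord, hy], ?_, fun x hx => ?_⟩
  · exact List.pairwise_reverse.mpr (pairwise_wordParts _)
  · exact le_of_mem_wordParts (List.mem_reverse.mp hx)

theorem perim_partitionOfWord (w : List Bool) : perim (partitionOfWord w) = w.length + 1 := by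
  obtain ⟨y, hy⟩ := exists_wordParts_append_true_eq_concat (h := 1) w
  have hhead : (partitionOfWord w).headI = 1 + w.count false := by simp [partitionOfWord, hy]
  have hlen : (partitionOfWord w).length = w.count true + 1 := by
    simp [partitionOfWord, length_wordParts]
  rw [perim, hhead, hlen]
  have := List.count_false_add_count_true w
  omega

theorem repStat_partitionOfWord (w : List Bool) :
    repStat (partitionOfWord w) = adjTrueCount false (w ++ [true]) := by
  rw [partitionOfWord, repStat_reverse, repStat_wordParts]

theorem evenStat_partitionOfWord (w : List Bool) :
    evenStat (partitionOfWord w) = evenTrueCount false (w ++ [true]) := by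
  rw [evenStat, partitionOfWord, List.countP_reverse, countP_even_wordParts]
  rfl

theorem partitionOfWord_injective : Function.Injective partitionOfWord :=
  List.reverse_injective.comp wordParts_append_true_injective

theorem exists_partitionOfWord_eq {l : List ℕ} (hl : IsPartition l) :
    ∃ w, partitionOfWord w = l := by
  obtain ⟨hne, hsorted, hpos⟩ := hl
  obtain ⟨a, t, hat⟩ := List.exists_cons_of_ne_nil (List.reverse_ne_nil_iff.mpr hne)
  obtain ⟨w, hw⟩ := exists_wordOfParts_eq_append_true (h := 1) a t
  have hchain : (1 :: a :: t).Pairwise (· ≤ ·) := by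
    rw [← hat, List.pairwise_cons, List.pairwise_reverse]
    exact ⟨fun x hx => hpos x (List.mem_reverse.mp hx), hsorted⟩
  refine ⟨w, ?_⟩
  rw [partitionOfWord, ← hw, wordParts_wordOfParts hchain, ← hat, List.reverse_reverse]

theorem ncard_setOf_partition (n : ℕ) (P : List ℕ → Prop) :
    {l | IsPartition l ∧ perim l = n ∧ P l}.ncard =
      {w : List Bool | w.length + 1 = n ∧ P (partitionOfWord w)}.ncard := by
  rw [← Set.ncard_image_of_injective _ partitionOfWord_injective]
  congr 1
  ext l
  constructor
  · rintro ⟨hl, rfl, hP⟩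
    obtain ⟨w, rfl⟩ := exists_partitionOfWord_eq hl
    exact ⟨w, ⟨(perim_partitionOfWord w).symm, hP⟩, rfl⟩
  · rintro ⟨w, ⟨rfl, hP⟩, rfl⟩
    exact ⟨isPartition_partitionOfWord w, perim_partitionOfWord w, hP⟩

theorem length_xnorWord (s : Bool) (w : List Bool) : (xnorWord s w).length = w.length := by
  induction w generalizing s <;> simp [xnorWord, *]

theorem length_unxnorWord (s : Bool) (w : List Bool) : (unxnorWord s w).length = w.length := by
  induction w generalizing s <;> simp [unxnorWord, *]

theorem unxnorWord_xnorWord (s : Bool) (w : List Bool) : unxnorWord s (xnorWord s w) = w := by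
  induction w generalizing s with
  | nil => rfl
  | cons a w ih => cases s <;> cases a <;> simp [xnorWord, unxnorWord, ih]

theorem xnorWord_unxnorWord (s : Bool) (w : List Bool) : xnorWord s (unxnorWord s w) = w := by
  induction w generalizing s with
  | nil => rfl
  | cons b w ih => cases s <;> cases b <;> simp [xnorWord, unxnorWord, ih]

theorem adjTrueCount_eq_evenTrueCount_xnorWord (s : Bool) (w : List Bool) :
    adjTrueCount s (w ++ [true]) = evenTrueCount s (xnorWord s w ++ [true]) := by
  induction w generalizing s with
  | nil => cases s <;> rfl
  | cons a w ih => cases s <;> cases a <;> simp [adjTrueCount, evenTrueCount, xnorWord, ih]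

theorem rep_eq_even_perimeter_general (n k : ℕ) :
    {l : List ℕ | IsPartition l ∧ perim l = n ∧ repStat l = k}.ncard =
    {l : List ℕ | IsPartition l ∧ perim l = n ∧ evenStat l = k}.ncard := by
  simp only [ncard_setOf_partition n, repStat_partitionOfWord, evenStat_partitionOfWord]
  rw [← Set.ncard_image_of_injective _ (Function.LeftInverse.injective (unxnorWord_xnorWord false))]
  congr 1
  ext w
  constructor
  · rintro ⟨u, ⟨hu, rfl⟩, rfl⟩
    exact ⟨by rw [length_xnorWord, hu], (adjTrueCount_eq_evenTrueCount_xnorWord false u).symm⟩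
  · rintro ⟨hw, rfl⟩
    refine ⟨unxnorWord false w, ⟨by rw [length_unxnorWord, hw], ?_⟩, xnorWord_unxnorWord false w⟩
    rw [adjTrueCount_eq_evenTrueCount_xnorWord, xnorWord_unxnorWord]

theorem rep_eq_even_perimeter (n k : ℕ) (hn : 1 ≤ n) :
    {l : List ℕ | IsPartition l ∧ perim l = n ∧ repStat l = k}.ncard =
    {l : List ℕ | IsPartition l ∧ perim l = n ∧ evenStat l = k}.ncard :=
  rep_eq_even_perimeter_general n k
end

section
/- For n ≥ 1 and 0 ≤ k ≤ n−1, the number of partitions with perimeter n having exactly k repeated parts equals the number of (k+1)-extraordinary subsets of {1,...,n}. -/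
/-!
Send a partition `λ` with `ℓ` parts and perimeter `n` to the set of the positions `i + 1` of its
repetitions `λ_i = λ_{i+1}`, all below `ℓ`, together with `n + 1 - v` for each distinct part `v`,
all in `[ℓ, n]`, the largest part giving `ℓ` itself. Distinct parts and repetitions together
number `ℓ`, so this set has `ℓ` elements, `rep λ` of them below `ℓ`: it is
`(rep λ + 1)`-extraordinary. A weakly decreasing list is determined by its set of values and its
repetition positions, and any set of positions in `[0, ℓ - 1)` and set of values of total size `ℓ`
arises, so the map is a bijection.
-/

open Finset

theorem Finset.card_eq_card_preimage_succ_add (E : Finset ℕ) :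
    E.card = (E.preimage (· + 1) (add_left_injective 1).injOn).card + if 0 ∈ E then 1 else 0 := by
  have : (E.preimage (· + 1) (add_left_injective 1).injOn).map (addRightEmbedding 1) =
      E.erase 0 := by
    ext x; cases x <;> simp
  rw [← card_map (addRightEmbedding 1) (s := E.preimage _ _), this, card_erase_eq_ite]
  split_ifs with h
  · have := card_pos.mpr ⟨0, h⟩; omega
  · rfl

theorem Finset.image_image_of_leftInvOn {α β : Type*} [DecidableEq α] [DecidableEq β]
    {f : α → β} {g : β → α} {s : Finset α} (h : Set.LeftInvOn g f s) :
    (s.image f).image g = s := by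
  rw [image_image, image_congr (f := g ∘ f) (g := id) h, image_id]

theorem Nat.injOn_tsub_left {c : ℕ} {s : Set ℕ} (h : ∀ x ∈ s, x ≤ c) :
    Set.InjOn (c - ·) s := fun x hx y hy hxy => (tsub_right_inj (h x hx) (h y hy)).mp hxy

theorem Finset.filter_lt_union_filter_le {α : Type*} [LinearOrder α] (s : Finset α) (c : α) :
    s.filter (· < c) ∪ s.filter (c ≤ ·) = s := by
  simp only [← not_lt, filter_union_filter_not_eq]

theorem Finset.card_filter_lt_orderEmbOfFin {α : Type*} [LinearOrder α] (S : Finset α)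
    (i : Fin S.card) : (S.filter (· < S.orderEmbOfFin rfl i)).card = i := by
  set f := S.orderEmbOfFin rfl
  have : S.filter (· < f i) = (Iio i).map f.toEmbedding := by
    ext y
    simp only [mem_filter, mem_map, mem_Iio, RelEmbedding.coe_toEmbedding]
    constructor
    · rintro ⟨hy, hlt⟩
      obtain ⟨a, rfl⟩ : y ∈ Set.range f := by simpa [f] using hy
      exact ⟨a, f.lt_iff_lt.mp hlt, rfl⟩
    · rintro ⟨a, ha, rfl⟩
      exact ⟨S.orderEmbOfFin_mem rfl a, f.lt_iff_lt.mpr ha⟩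
  rw [this, card_map, Fin.card_Iio]

theorem Finset.getD_sort_eq_iff {α : Type*} [LinearOrder α] {S : Finset α} {k : ℕ} {x d : α} :
    k < S.card ∧ (S.sort (· ≤ ·)).getD k d = x ↔ x ∈ S ∧ (S.filter (· < x)).card = k := by
  have getD_eq (i : Fin S.card) : (S.sort (· ≤ ·)).getD i d = S.orderEmbOfFin rfl i := by
    rw [List.getD_eq_getElem _ _ (by simp)]; rfl
  constructor
  · rintro ⟨hk, rfl⟩
    rw [getD_eq ⟨k, hk⟩]
    exact ⟨orderEmbOfFin_mem _ _ _, card_filter_lt_orderEmbOfFin S ⟨k, hk⟩⟩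
  · rintro ⟨hx, rfl⟩
    obtain ⟨i, rfl⟩ : x ∈ Set.range (S.orderEmbOfFin rfl) := by simpa using hx
    rw [card_filter_lt_orderEmbOfFin]
    exact ⟨i.2, getD_eq i⟩

theorem List.le_of_mem_of_pairwise_ge {α : Type*} [Preorder α] {a x : α} {l : List α}
    (h : (a :: l).Pairwise (· ≥ ·)) (hx : x ∈ a :: l) : x ≤ a := by
  rcases List.mem_cons.mp hx with rfl | hx
  exacts [le_rfl, List.rel_of_pairwise_cons h hx]

theorem List.mem_iff_head?_eq_of_pairwise_ge {α : Type*} [PartialOrder α] {a : α} {l : List α}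
    (h : (a :: l).Pairwise (· ≥ ·)) : a ∈ l ↔ l.head? = some a := by
  cases l with
  | nil => simp
  | cons b t =>
    simp only [List.mem_cons, List.head?_cons, Option.some.injEq]
    refine ⟨?_, fun hb => .inl hb.symm⟩
    rintro (hab | hat)
    · exact hab.symm
    · exact le_antisymm (List.rel_of_pairwise_cons h List.mem_cons_self)
        (List.rel_of_pairwise_cons h.of_cons hat)

def repeats (l : List ℕ) : Finset ℕ :=
  (range (l.length - 1)).filter fun i => l.getD i 0 = l.getD (i + 1) 0

theorem repStat_eq_card_repeats (l : List ℕ) : repStat l = (repeats l).card := rfl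

theorem repeats_subset_range (l : List ℕ) : repeats l ⊆ range (l.length - 1) :=
  filter_subset _ _

theorem succ_mem_repeats_cons {a i : ℕ} {l : List ℕ} :
    i + 1 ∈ repeats (a :: l) ↔ i ∈ repeats l := by
  simp only [repeats, mem_filter, mem_range, List.length_cons, List.getD_cons_succ]
  omega

theorem zero_mem_repeats_cons {a : ℕ} {l : List ℕ} (h : (a :: l).Pairwise (· ≥ ·)) :
    0 ∈ repeats (a :: l) ↔ a ∈ l := by
  rw [List.mem_iff_head?_eq_of_pairwise_ge h]
  cases l <;> simp [repeats, eq_comm]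

theorem card_repeats_cons {a : ℕ} {l : List ℕ} (h : (a :: l).Pairwise (· ≥ ·)) :
    (repeats (a :: l)).card = (repeats l).card + if a ∈ l then 1 else 0 := by
  have : (repeats (a :: l)).preimage (· + 1) (add_left_injective 1).injOn = repeats l := by
    ext i; simp [succ_mem_repeats_cons]
  rw [card_eq_card_preimage_succ_add, this]
  simp only [zero_mem_repeats_cons h]

theorem card_repeats_add_card_toFinset {l : List ℕ} (hl : l.Pairwise (· ≥ ·)) :
    (repeats l).card + l.toFinset.card = l.length := by
  induction l with
  | nil => rfl
  | cons a l ih =>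
    have := ih hl.of_cons
    by_cases ha : a ∈ l <;>
      simp [card_repeats_cons hl, ha, card_insert_of_notMem] <;> omega

theorem List.Pairwise.eq_of_repeats_eq_of_toFinset_eq {l₁ l₂ : List ℕ}
    (h₁ : l₁.Pairwise (· ≥ ·)) (h₂ : l₂.Pairwise (· ≥ ·))
    (hrep : repeats l₁ = repeats l₂) (hset : l₁.toFinset = l₂.toFinset) : l₁ = l₂ := by
  induction l₁ generalizing l₂ with
  | nil => exact (List.toFinset_eq_empty_iff _).mp hset.symm |>.symm
  | cons a t ih =>
    obtain _ | ⟨b, u⟩ := l₂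
    · simp at hset
    have hmem (x : ℕ) : x ∈ a :: t ↔ x ∈ b :: u := by
      simpa using congrArg (x ∈ ·) hset
    obtain rfl : a = b := le_antisymm
      (List.le_of_mem_of_pairwise_ge h₂ ((hmem a).mp List.mem_cons_self))
      (List.le_of_mem_of_pairwise_ge h₁ ((hmem b).mpr List.mem_cons_self))
    congr 1
    refine ih h₁.of_cons h₂.of_cons ?_ ?_
    · ext i; rw [← succ_mem_repeats_cons (a := a), hrep, succ_mem_repeats_cons]
    · ext x
      rw [List.mem_toFinset, List.mem_toFinset]
      by_cases hx : x = a
      · rw [hx, ← zero_mem_repeats_cons h₁, ← zero_mem_repeats_cons h₂, hrep]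
      · simpa [hx] using hmem x

theorem repeats_cons_eq {a : ℕ} {l : List ℕ} {E : Finset ℕ} (h : (a :: l).Pairwise (· ≥ ·))
    (hl : repeats l = E.preimage (· + 1) (add_left_injective 1).injOn) (ha : a ∈ l ↔ 0 ∈ E) :
    repeats (a :: l) = E := by
  ext i
  cases i with
  | zero => rw [zero_mem_repeats_cons h, ha]
  | succ i => rw [succ_mem_repeats_cons, hl, mem_preimage]

theorem exists_pairwise_ge_repeats_eq_toFinset_eq (ℓ : ℕ) :
    ∀ E V : Finset ℕ, E ⊆ range (ℓ - 1) → E.card + V.card = ℓ →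
      ∃ l : List ℕ, l.Pairwise (· ≥ ·) ∧ repeats l = E ∧ l.toFinset = V := by
  induction ℓ with
  | zero =>
    intro E V _ hcard
    obtain ⟨rfl, rfl⟩ : E = ∅ ∧ V = ∅ := by simp only [← card_eq_zero]; omega
    exact ⟨[], List.Pairwise.nil, rfl, rfl⟩
  | succ ℓ ih =>
    intro E V hE hcard
    have hV : V.Nonempty := card_pos.mp <| by
      have := card_le_card hE
      rw [card_range] at this
      omega
    set m := V.max' hV
    -- The list is `m :: l` where `l` takes the values `V'`: it still contains `m` iff `0 ∈ E`.
    set V' := if 0 ∈ E then V else V.erase m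
    set E' := E.preimage (· + 1) (add_left_injective 1).injOn
    have hV'V : insert m V' = V := by
      unfold V'; split_ifs
      · exact insert_eq_of_mem (max'_mem V hV)
      · exact insert_erase (max'_mem V hV)
    have hmV' : m ∈ V' ↔ 0 ∈ E := by
      unfold V'; split_ifs with h
      · simpa [h] using max'_mem V hV
      · simp [h]
    have hcard' : E'.card + V'.card = ℓ := by
      have hE'card : E.card = E'.card + if 0 ∈ E then 1 else 0 :=
        card_eq_card_preimage_succ_add E
      have := hV.card_pos
      unfold V'; split_ifs with h
      · simp only [h, if_true] at hE'card; omega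
      · rw [card_erase_of_mem (max'_mem V hV)]; simp only [h, if_false] at hE'card; omega
    have hE' : E' ⊆ range (ℓ - 1) := fun i hi => by
      have := mem_range.mp (hE (mem_preimage.mp hi))
      exact mem_range.mpr (by omega)
    obtain ⟨l, hl, hrep, hset⟩ := ih E' V' hE' hcard'
    have hsorted : (m :: l).Pairwise (· ≥ ·) := by
      refine List.pairwise_cons.mpr ⟨fun x hx => ?_, hl⟩
      rw [← List.mem_toFinset, hset] at hx
      exact le_max' V x (hV'V ▸ mem_insert_of_mem hx)
    refine ⟨m :: l, hsorted, repeats_cons_eq hsorted hrep ?_, ?_⟩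
    · rw [← List.mem_toFinset, hset, hmV']
    · rw [List.toFinset_cons, hset, hV'V]

namespace IsPartition

variable {l : List ℕ}

theorem le_headI (hl : IsPartition l) {x : ℕ} (hx : x ∈ l) : x ≤ l.headI := by
  obtain _ | ⟨a, t⟩ := l
  · exact absurd rfl hl.1
  · exact List.le_of_mem_of_pairwise_ge hl.2.1 hx

theorem headI_mem (hl : IsPartition l) : l.headI ∈ l := by
  obtain _ | ⟨a, t⟩ := l
  · exact absurd rfl hl.1
  · exact List.mem_cons_self

theorem headI_add_length (hl : IsPartition l) {n : ℕ} (hn : perim l = n) :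
    l.headI + l.length = n + 1 := by
  have := hl.2.2 _ hl.headI_mem
  have := List.length_pos_iff.mpr hl.1
  rw [perim] at hn
  omega

end IsPartition

theorem isPartition_and_perim_eq_of_toFinset_eq_image {l : List ℕ} {n : ℕ} {T : Finset ℕ}
    (hl : l.Pairwise (· ≥ ·)) (hT : ∀ x ∈ T, l.length ≤ x ∧ x ≤ n) (hlT : l.length ∈ T)
    (hset : l.toFinset = T.image (n + 1 - ·)) : IsPartition l ∧ perim l = n := by
  have hbound : ∀ v ∈ l, 1 ≤ v ∧ v ≤ n + 1 - l.length := fun v hv => by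
    rw [← List.mem_toFinset, hset] at hv
    obtain ⟨x, hx, rfl⟩ := mem_image.mp hv
    have := hT x hx
    omega
  have hmax : n + 1 - l.length ∈ l := by
    rw [← List.mem_toFinset, hset]
    exact mem_image_of_mem _ hlT
  have hpart : IsPartition l :=
    ⟨List.ne_nil_of_mem hmax, hl, fun v hv => (hbound v hv).1⟩
  have hhead : l.headI = n + 1 - l.length :=
    le_antisymm (hbound _ hpart.headI_mem).2 (hpart.le_headI hmax)
  have := hT _ hlT
  refine ⟨hpart, ?_⟩
  rw [perim, hhead]
  omega

/-- `S ⊆ [n]` is `(k + 1)`-extraordinary in the paper's (1-indexed) sense. -/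
def IsExtraordinary (n k : ℕ) (S : Finset ℕ) : Prop :=
  S ⊆ Icc 1 n ∧ S.card ∈ S ∧ (S.filter (· < S.card)).card = k

theorem isExtraordinary_iff {n k : ℕ} {S : Finset ℕ} : IsExtraordinary n k S ↔
    S ⊆ Icc 1 n ∧ k + 1 ≤ S.card ∧ S.card = (S.sort (· ≤ ·)).getD k 0 := by
  rw [IsExtraordinary, ← getD_sort_eq_iff, eq_comm]
  rfl

def extraordinarySet (n : ℕ) (l : List ℕ) : Finset ℕ :=
  (repeats l).image (· + 1) ∪ l.toFinset.image (n + 1 - ·)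

section ExtraordinarySet

variable {n : ℕ} {l : List ℕ}

theorem mem_Ico_of_mem_image_repeats {x : ℕ} (hx : x ∈ (repeats l).image (· + 1)) :
    x ∈ Ico 1 l.length := by
  obtain ⟨i, hi, rfl⟩ := mem_image.mp hx
  have := mem_range.mp (repeats_subset_range l hi)
  exact mem_Ico.mpr (by omega)

theorem mem_Icc_of_mem_image_toFinset (hl : IsPartition l) (hn : perim l = n) {x : ℕ}
    (hx : x ∈ l.toFinset.image (n + 1 - ·)) : x ∈ Icc l.length n := by
  obtain ⟨v, hv, rfl⟩ := mem_image.mp hx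
  rw [List.mem_toFinset] at hv
  have := hl.2.2 v hv
  have := hl.le_headI hv
  have := hl.headI_add_length hn
  exact mem_Icc.mpr (by omega)

theorem filter_lt_length_extraordinarySet (hl : IsPartition l) (hn : perim l = n) :
    (extraordinarySet n l).filter (· < l.length) = (repeats l).image (· + 1) := by
  rw [extraordinarySet, filter_union,
    filter_true_of_mem fun x hx => (mem_Ico.mp (mem_Ico_of_mem_image_repeats hx)).2,
    filter_false_of_mem fun x hx =>
      not_lt.mpr (mem_Icc.mp (mem_Icc_of_mem_image_toFinset hl hn hx)).1,
    union_empty]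

theorem filter_length_le_extraordinarySet (hl : IsPartition l) (hn : perim l = n) :
    (extraordinarySet n l).filter (l.length ≤ ·) = l.toFinset.image (n + 1 - ·) := by
  rw [extraordinarySet, filter_union,
    filter_true_of_mem fun x hx => (mem_Icc.mp (mem_Icc_of_mem_image_toFinset hl hn hx)).1,
    filter_false_of_mem fun x hx =>
      not_le.mpr (mem_Ico.mp (mem_Ico_of_mem_image_repeats hx)).2,
    empty_union]

theorem card_extraordinarySet (hl : IsPartition l) (hn : perim l = n) :
    (extraordinarySet n l).card = l.length := by
  have hdisj : Disjoint ((repeats l).image (· + 1)) (l.toFinset.image (n + 1 - ·)) :=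
    disjoint_left.mpr fun x h₁ h₂ => by
      have := mem_Ico.mp (mem_Ico_of_mem_image_repeats h₁)
      have := mem_Icc.mp (mem_Icc_of_mem_image_toFinset hl hn h₂)
      omega
  have hinj : Set.InjOn (n + 1 - ·) l.toFinset := Nat.injOn_tsub_left fun v hv => by
    have := hl.le_headI (List.mem_toFinset.mp hv)
    have := hl.headI_add_length hn
    omega
  rw [extraordinarySet, card_union_of_disjoint hdisj,
    card_image_of_injective _ (add_left_injective 1), card_image_of_injOn hinj,
    card_repeats_add_card_toFinset hl.2.1]

theorem isExtraordinary_extraordinarySet (hl : IsPartition l) (hn : perim l = n) :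
    IsExtraordinary n (repStat l) (extraordinarySet n l) := by
  rw [IsExtraordinary, card_extraordinarySet hl hn, filter_lt_length_extraordinarySet hl hn,
    card_image_of_injective _ (add_left_injective 1), repStat_eq_card_repeats]
  have := hl.headI_add_length hn
  have := hl.2.2 _ hl.headI_mem
  have := List.length_pos_iff.mpr hl.1
  refine ⟨fun x hx => ?_, mem_union_right _ ?_, rfl⟩
  · rcases mem_union.mp hx with h | h
    · have := mem_Ico.mp (mem_Ico_of_mem_image_repeats h)
      exact mem_Icc.mpr ⟨this.1, by omega⟩
    · have := mem_Icc.mp (mem_Icc_of_mem_image_toFinset hl hn h)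
      exact mem_Icc.mpr ⟨by omega, this.2⟩
  · exact mem_image.mpr ⟨l.headI, List.mem_toFinset.mpr hl.headI_mem, by omega⟩

theorem toFinset_eq_image_filter_extraordinarySet (hl : IsPartition l) (hn : perim l = n) :
    l.toFinset = ((extraordinarySet n l).filter (l.length ≤ ·)).image (n + 1 - ·) := by
  rw [filter_length_le_extraordinarySet hl hn, image_image_of_leftInvOn]
  intro v hv
  dsimp only
  have := hl.le_headI (List.mem_toFinset.mp hv)
  have := hl.headI_add_length hn
  omega

theorem extraordinarySet_injOn :
    Set.InjOn (extraordinarySet n) {l | IsPartition l ∧ perim l = n} := by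
  rintro l₁ ⟨hl₁, hn₁⟩ l₂ ⟨hl₂, hn₂⟩ h
  have hlen : l₁.length = l₂.length := by
    rw [← card_extraordinarySet hl₁ hn₁, h, card_extraordinarySet hl₂ hn₂]
  refine hl₁.2.1.eq_of_repeats_eq_of_toFinset_eq hl₂.2.1 ?_ ?_
  · apply image_injective (add_left_injective 1)
    rw [← filter_lt_length_extraordinarySet hl₁ hn₁, ← filter_lt_length_extraordinarySet hl₂ hn₂,
      h, hlen]
  · rw [toFinset_eq_image_filter_extraordinarySet hl₁ hn₁,
      toFinset_eq_image_filter_extraordinarySet hl₂ hn₂, h, hlen]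

theorem exists_extraordinarySet_eq {k : ℕ} {S : Finset ℕ} (hS : IsExtraordinary n k S) :
    ∃ l, IsPartition l ∧ perim l = n ∧ repStat l = k ∧ extraordinarySet n l = S := by
  obtain ⟨hSn, hmem, hk⟩ := hS
  set ℓ := S.card
  have hS1 : ∀ x ∈ S, 1 ≤ x ∧ x ≤ n := fun x hx => mem_Icc.mp (hSn hx)
  set E := (S.filter (· < ℓ)).image (· - 1)
  set V := (S.filter (ℓ ≤ ·)).image (n + 1 - ·)
  have hEimage : E.image (· + 1) = S.filter (· < ℓ) := image_image_of_leftInvOn fun x hx => by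
    have := hS1 x (mem_filter.mp hx).1; omega
  have hVimage : V.image (n + 1 - ·) = S.filter (ℓ ≤ ·) := image_image_of_leftInvOn fun x hx => by
    have := hS1 x (mem_filter.mp hx).1; omega
  have hEcard : E.card = k := by
    rw [← hk, ← hEimage, card_image_of_injective _ (add_left_injective 1)]
  have hE : E ⊆ range (ℓ - 1) := fun i hi => by
    obtain ⟨x, hx, rfl⟩ := mem_image.mp hi
    have := hS1 x (mem_filter.mp hx).1
    have := (mem_filter.mp hx).2
    exact mem_range.mpr (by omega)
  have hcard : E.card + V.card = ℓ := by
    rw [hEcard, card_image_of_injOn (Nat.injOn_tsub_left fun x hx =>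
      (hS1 x (mem_filter.mp hx).1).2.trans n.le_succ), ← hk, ← card_union_of_disjoint,
      filter_lt_union_filter_le]
    exact disjoint_filter.mpr fun x _ h₁ h₂ => by omega
  obtain ⟨l, hsorted, hrep, hset⟩ := exists_pairwise_ge_repeats_eq_toFinset_eq ℓ E V hE hcard
  have hlen : l.length = ℓ := by
    rw [← card_repeats_add_card_toFinset hsorted, hrep, hset, hcard]
  obtain ⟨hl, hn⟩ := isPartition_and_perim_eq_of_toFinset_eq_image hsorted
    (fun x hx => ⟨hlen ▸ (mem_filter.mp hx).2, (hS1 x (mem_filter.mp hx).1).2⟩)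
    (mem_filter.mpr ⟨hlen ▸ hmem, hlen.ge⟩) hset
  refine ⟨l, hl, hn, by rw [repStat_eq_card_repeats, hrep, hEcard], ?_⟩
  rw [extraordinarySet, hrep, hset, hEimage, hVimage, filter_lt_union_filter_le]

end ExtraordinarySet

theorem image_extraordinarySet (n k : ℕ) :
    extraordinarySet n '' {l | IsPartition l ∧ perim l = n ∧ repStat l = k} =
      {S | IsExtraordinary n k S} := by
  ext S
  constructor
  · rintro ⟨l, ⟨hl, hn, rfl⟩, rfl⟩
    exact isExtraordinary_extraordinarySet hl hn
  · intro hS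
    obtain ⟨l, hl, hn, hk, rfl⟩ := exists_extraordinarySet_eq hS
    exact ⟨l, ⟨hl, hn, hk⟩, rfl⟩

theorem rep_eq_extraordinary_general (n k : ℕ) :
    {l : List ℕ | IsPartition l ∧ perim l = n ∧ repStat l = k}.ncard =
    {S : Finset ℕ | S ⊆ Finset.Icc 1 n ∧ k + 1 ≤ S.card ∧
      S.card = (S.sort (· ≤ ·)).getD k 0}.ncard := by
  have hext : {S : Finset ℕ | S ⊆ Icc 1 n ∧ k + 1 ≤ S.card ∧
      S.card = (S.sort (· ≤ ·)).getD k 0} = {S | IsExtraordinary n k S} :=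
    Set.ext fun _ => isExtraordinary_iff.symm
  rw [hext, ← image_extraordinarySet]
  exact (extraordinarySet_injOn.mono fun _ hl => And.imp_right And.left hl).ncard_image.symm

theorem rep_eq_extraordinary (n k : ℕ) (hn : 1 ≤ n) (hk : k ≤ n - 1) :
    {l : List ℕ | IsPartition l ∧ perim l = n ∧ repStat l = k}.ncard =
    {S : Finset ℕ | S ⊆ Finset.Icc 1 n ∧ k + 1 ≤ S.card ∧
      S.card = (S.sort (· ≤ ·)).getD k 0}.ncard :=
  rep_eq_extraordinary_general n k
end

section
/- There is a bijection between partitions with perimeter n and 01-sequences w₀w₁...w_n with w₀ = 0 and w_n = 1, under which the number of parts of λ equals the number of indices 1 ≤ i ≤ n with w_i = 1, the number of repeated parts rep(λ) equals |{1 ≤ i ≤ n : w_i = w_{i−1} = 1}|, and the number of even parts even(λ) equals the number of indices 1 ≤ i ≤ n with w_i = 1 such that the number of j with 0 ≤ j < i and w_j = 0 is even. -/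
/-!
Write h_j = λ_j + ℓ - j for the first-column hook lengths of λ. Walking along the boundary,
the i-th edge is vertical exactly when i is one of the h_j, so the word is the indicator of
{h_1 > ⋯ > h_ℓ} ⊆ [1, n], and h_1 = λ_1 + ℓ - 1 = n. Conversely every subset of [1, n]
containing n is such a set of hook lengths, which gives the bijection. Consecutive hook lengths
h_j, h_{j+1} are adjacent exactly when λ_j = λ_{j+1}, and exactly ℓ - j hook lengths lie below
h_j, so the vertical edge at h_j is preceded by h_j - (ℓ - j) = λ_j horizontal ones.
-/

open Finset

namespace PartitionWord

def betaNumbers : List ℕ → List ℕ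
  | [] => []
  | a :: l => (a + l.length) :: betaNumbers l

def ofBetaNumbers : List ℕ → List ℕ
  | [] => []
  | b :: s => (b - s.length) :: ofBetaNumbers s

@[simp] theorem length_betaNumbers (l : List ℕ) : (betaNumbers l).length = l.length := by
  induction l <;> simp [betaNumbers, *]

@[simp] theorem length_ofBetaNumbers (s : List ℕ) : (ofBetaNumbers s).length = s.length := by
  induction s <;> simp [ofBetaNumbers, *]

theorem ofBetaNumbers_betaNumbers (l : List ℕ) : ofBetaNumbers (betaNumbers l) = l := by
  induction l <;> simp [betaNumbers, ofBetaNumbers, *]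

theorem betaNumbers_ofBetaNumbers {s : List ℕ} (hs : s.SortedGT) :
    betaNumbers (ofBetaNumbers s) = s := by
  induction s with
  | nil => rfl
  | cons b s ih =>
    rw [List.sortedGT_iff_pairwise, List.pairwise_cons] at hs
    have : s.length ≤ b := by
      simpa using
        (List.subperm_of_subset hs.2.nodup fun x hx => List.mem_range.2 (hs.1 x hx)).length_le
    simp [betaNumbers, ofBetaNumbers, ih hs.2.sortedGT, Nat.sub_add_cancel this]

theorem sortedGT_betaNumbers_iff {l : List ℕ} : (betaNumbers l).SortedGT ↔ l.SortedGE := by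
  rw [List.sortedGT_iff_isChain, List.sortedGE_iff_isChain]
  induction l with
  | nil => simp [betaNumbers]
  | cons a l ih =>
    cases l with
    | nil => simp [betaNumbers]
    | cons b l => simp [betaNumbers, ← ih]; omega

theorem headI_betaNumbers (l : List ℕ) : (betaNumbers l).headI = perim l := by
  cases l <;> simp [betaNumbers, perim]

theorem zero_notMem_betaNumbers_iff {l : List ℕ} (hl : l.SortedGE) :
    0 ∉ betaNumbers l ↔ ∀ x ∈ l, 0 < x := by
  induction l with
  | nil => simp [betaNumbers]
  | cons a l ih =>
    rw [List.sortedGE_iff_pairwise, List.pairwise_cons] at hl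
    rw [List.forall_mem_cons]
    simp only [betaNumbers, List.mem_cons, not_or, ih hl.2.sortedGE]
    refine ⟨fun ⟨ha, hpos⟩ => ⟨?_, hpos⟩, fun ⟨ha, hpos⟩ => ⟨by omega, hpos⟩⟩
    cases l with
    | nil => simpa [eq_comm, Nat.pos_iff_ne_zero] using ha
    | cons b l => exact lt_of_lt_of_le (hpos b List.mem_cons_self) (hl.1 b List.mem_cons_self)

theorem mem_and_forall_le_iff {α : Type*} [PartialOrder α] [Inhabited α] {s : List α}
    (hs : s.SortedGE) {n : α} :
    (n ∈ s ∧ ∀ x ∈ s, x ≤ n) ↔ s ≠ [] ∧ s.headI = n := by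
  cases s with
  | nil => simp
  | cons b s =>
    rw [List.sortedGE_iff_pairwise, List.pairwise_cons] at hs
    rw [List.forall_mem_cons]
    simp only [List.mem_cons, ne_eq, reduceCtorEq, not_false_eq_true,
      List.headI_cons, true_and]
    constructor
    · rintro ⟨rfl | hn, hb, hle⟩
      · rfl
      · exact le_antisymm hb (hs.1 n hn)
    · rintro rfl
      exact ⟨Or.inl rfl, le_rfl, hs.1⟩

def IsBetaSet (n : ℕ) (s : List ℕ) : Prop :=
  s.SortedGT ∧ 0 ∉ s ∧ n ∈ s ∧ ∀ x ∈ s, x ≤ n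

theorem isPartition_and_perim_eq_iff {l : List ℕ} {n : ℕ} :
    IsPartition l ∧ perim l = n ↔ IsBetaSet n (betaNumbers l) := by
  rw [IsBetaSet, sortedGT_betaNumbers_iff]
  constructor
  · rintro ⟨⟨hne, hl, hpos⟩, rfl⟩
    have hl := hl.sortedGE
    refine ⟨hl, (zero_notMem_betaNumbers_iff hl).2 hpos, ?_⟩
    rw [mem_and_forall_le_iff (sortedGT_betaNumbers_iff.2 hl).sortedGE, headI_betaNumbers]
    simpa [← List.length_eq_zero_iff] using hne
  · rintro ⟨hl, h0, hn⟩
    rw [mem_and_forall_le_iff (sortedGT_betaNumbers_iff.2 hl).sortedGE, headI_betaNumbers] at hn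
    refine ⟨⟨?_, hl.pairwise, (zero_notMem_betaNumbers_iff hl).1 h0⟩, hn.2⟩
    simpa [← List.length_eq_zero_iff] using hn.1

def wordOf (n : ℕ) (s : List ℕ) : List Bool := (List.range (n + 1)).map (· ∈ s)

def trueIndices (w : List Bool) : List ℕ :=
  ((List.range w.length).filter (w.getD · false)).reverse

@[simp] theorem length_wordOf (n : ℕ) (s : List ℕ) : (wordOf n s).length = n + 1 := by
  simp [wordOf]

theorem getD_wordOf {n i : ℕ} (s : List ℕ) (hi : i ≤ n) (d : Bool) :
    (wordOf n s).getD i d = decide (i ∈ s) := by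
  simp [wordOf, List.getD_eq_getElem?_getD, Nat.lt_succ_of_le hi]

theorem mem_trueIndices {w : List Bool} {i : ℕ} :
    i ∈ trueIndices w ↔ w.getD i false = true := by
  simp only [trueIndices, List.mem_reverse, List.mem_filter, List.mem_range, and_iff_right_iff_imp]
  intro h
  by_contra hi
  rw [List.getD_eq_default _ _ (not_lt.1 hi)] at h
  exact Bool.false_ne_true h

theorem sortedGT_trueIndices (w : List Bool) : (trueIndices w).SortedGT :=
  (List.pairwise_reverse.2 (List.pairwise_lt_range.filter _)).sortedGT

theorem trueIndices_wordOf {n : ℕ} {s : List ℕ} (hs : s.SortedGT) (hn : ∀ x ∈ s, x ≤ n) :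
    trueIndices (wordOf n s) = s := by
  refine (sortedGT_trueIndices _).eq_of_mem_iff hs fun i => ?_
  rw [mem_trueIndices]
  by_cases hi : i ≤ n
  · rw [getD_wordOf s hi, decide_eq_true_iff]
  · rw [List.getD_eq_default _ _ (by simpa using hi)]
    simpa using fun h => hi (hn i h)

theorem wordOf_trueIndices {n : ℕ} {w : List Bool} (hw : w.length = n + 1) :
    wordOf n (trueIndices w) = w := by
  refine List.ext_getElem (by simp [hw]) fun i _ hi => ?_
  simp [wordOf, mem_trueIndices, List.getElem?_eq_getElem hi]

theorem isBetaSet_trueIndices {n : ℕ} {w : List Bool}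
    (hw : w.length = n + 1 ∧ w.getD 0 true = false ∧ w.getD n false = true) :
    IsBetaSet n (trueIndices w) := by
  obtain ⟨hlen, h0, hn⟩ := hw
  refine ⟨sortedGT_trueIndices w, fun h => ?_, mem_trueIndices.2 hn, fun x hx => ?_⟩
  · rw [mem_trueIndices, List.getD_eq_getElem _ _ (by omega)] at h
    rw [List.getD_eq_getElem _ _ (by omega), h] at h0
    exact Bool.noConfusion h0
  · have := (List.mem_filter.1 (List.mem_reverse.1 hx)).1
    rw [List.mem_range] at this
    omega

def partitionEquivBetaSet (n : ℕ) :
    {l : List ℕ // IsPartition l ∧ perim l = n} ≃ {s : List ℕ // IsBetaSet n s} where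
  toFun l := ⟨betaNumbers l, isPartition_and_perim_eq_iff.1 l.2⟩
  invFun s := ⟨ofBetaNumbers s, isPartition_and_perim_eq_iff.2 <| by
    rw [betaNumbers_ofBetaNumbers s.2.1]; exact s.2⟩
  left_inv l := Subtype.ext (ofBetaNumbers_betaNumbers l)
  right_inv s := Subtype.ext (betaNumbers_ofBetaNumbers s.2.1)

def betaSetEquivWord (n : ℕ) :
    {s : List ℕ // IsBetaSet n s} ≃
      {w : List Bool // w.length = n + 1 ∧ w.getD 0 true = false ∧ w.getD n false = true} where
  toFun s := ⟨wordOf n s, length_wordOf n s,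
    by rw [getD_wordOf _ (Nat.zero_le n), decide_eq_false s.2.2.1],
    by rw [getD_wordOf _ le_rfl, decide_eq_true s.2.2.2.1]⟩
  invFun w := ⟨trueIndices w, isBetaSet_trueIndices w.2⟩
  left_inv s := Subtype.ext (trueIndices_wordOf s.2.1 s.2.2.2.2)
  right_inv w := Subtype.ext (wordOf_trueIndices w.2.1)

theorem repStat_cons_cons (a b : ℕ) (l : List ℕ) :
    repStat (a :: b :: l) = repStat (b :: l) + if a = b then 1 else 0 := by
  simp only [repStat, List.length_cons, Nat.add_sub_cancel, List.range_succ_eq_map,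
    List.filter_cons, List.filter_map, List.getD_cons_zero, List.getD_cons_succ]
  by_cases h : a = b <;> simp [h, Function.comp_def, add_comm]

theorem lt_add_length_of_mem_betaNumbers {a x : ℕ} {l : List ℕ} (hl : (a :: l).SortedGE)
    (hx : x ∈ betaNumbers l) : x < a + l.length :=
  List.rel_of_pairwise_cons (sortedGT_betaNumbers_iff.2 hl).pairwise hx

theorem card_toFinset_betaNumbers {l : List ℕ} (hl : l.SortedGE) :
    #(betaNumbers l).toFinset = l.length := by
  rw [List.toFinset_card_of_nodup (sortedGT_betaNumbers_iff.2 hl).nodup, length_betaNumbers]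

theorem evenStat_eq_card_filter {l : List ℕ} (hl : l.SortedGE) :
    evenStat l =
      #{x ∈ (betaNumbers l).toFinset | #(range x \ (betaNumbers l).toFinset) % 2 = 0} := by
  induction l with
  | nil => rfl
  | cons a l ih =>
    have hl' : l.SortedGE := hl.pairwise.of_cons.sortedGE
    have hlt : ∀ x ∈ (betaNumbers l).toFinset, x < a + l.length := fun x hx =>
      lt_add_length_of_mem_betaNumbers hl (List.mem_toFinset.1 hx)
    rw [betaNumbers, List.toFinset_cons]
    set T := (betaNumbers l).toFinset
    have hsdiff : ∀ x ≤ a + l.length, range x \ insert (a + l.length) T = range x \ T := by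
      intro x hx
      ext y
      simp only [mem_sdiff, mem_range, mem_insert, not_or]
      exact ⟨fun h => ⟨h.1, h.2.2⟩, fun h => ⟨h.1, by omega, h.2⟩⟩
    have htop : #(range (a + l.length) \ T) = a := by
      rw [card_sdiff_of_subset fun x hx => mem_range.2 (hlt x hx), card_range,
        card_toFinset_betaNumbers hl']
      omega
    rw [filter_insert, hsdiff _ le_rfl, htop,
      filter_congr fun x hx => by rw [hsdiff x (hlt x hx).le], evenStat, List.countP_cons,
      ← evenStat, ih hl']
    have hm : a + l.length ∉ {x ∈ T | #(range x \ T) % 2 = 0} :=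
      fun h => (hlt _ (mem_filter.1 h).1).false
    by_cases ha : a % 2 = 0 <;> simp [ha, card_insert_of_notMem hm]

theorem repStat_eq_card_filter {l : List ℕ} (hl : l.SortedGE) (hpos : ∀ x ∈ l, 0 < x) :
    repStat l = #{x ∈ (betaNumbers l).toFinset | x - 1 ∈ betaNumbers l} := by
  induction l with
  | nil => rfl
  | cons a l ih =>
    have hl' : l.SortedGE := hl.pairwise.of_cons.sortedGE
    have hlt : ∀ x ∈ (betaNumbers l).toFinset, x < a + l.length := fun x hx =>
      lt_add_length_of_mem_betaNumbers hl (List.mem_toFinset.1 hx)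
    have hm : a + l.length ∉ {x ∈ (betaNumbers l).toFinset | x - 1 ∈ betaNumbers l} :=
      fun h => (hlt _ (mem_filter.1 h).1).false
    have ha : 0 < a := hpos a List.mem_cons_self
    have htop : a + l.length - 1 ∈ (a + l.length) :: betaNumbers l ↔
        a + l.length - 1 ∈ betaNumbers l := by
      rw [List.mem_cons, or_iff_right (by omega)]
    rw [betaNumbers, List.toFinset_cons, filter_insert, filter_congr fun x hx => by
      rw [List.mem_cons, or_iff_right_of_imp fun h => absurd h (by have := hlt x hx; omega)],
      apply_ite card, card_insert_of_notMem hm,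
      ← ih hl' fun x hx => hpos x (List.mem_cons_of_mem a hx)]
    simp only [htop]
    cases l with
    | nil => rfl
    | cons b l =>
      have hab : b ≤ a := List.rel_of_pairwise_cons hl.pairwise List.mem_cons_self
      have hb : a + (l.length + 1) - 1 ∈ betaNumbers (b :: l) ↔ a = b := by
        rw [betaNumbers, List.mem_cons]
        constructor
        · rintro (h | h)
          · omega
          · have := lt_add_length_of_mem_betaNumbers hl' h
            omega
        · rintro rfl
          exact Or.inl (by omega)
      simp only [List.length_cons, hb, repStat_cons_cons]
      split_ifs <;> rfl

theorem filter_Icc_getD_wordOf {n : ℕ} {s : List ℕ} (hs : IsBetaSet n s) :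
    {i ∈ Icc 1 n | (wordOf n s).getD i false = true} = s.toFinset := by
  ext i
  simp only [mem_filter, mem_Icc, List.mem_toFinset]
  constructor
  · rintro ⟨⟨-, hi⟩, h⟩
    rwa [getD_wordOf s hi, decide_eq_true_iff] at h
  · intro h
    have : i ≠ 0 := fun h0 => hs.2.1 (h0 ▸ h)
    have hi := hs.2.2.2 i h
    exact ⟨⟨by omega, hi⟩, by rwa [getD_wordOf s hi, decide_eq_true_iff]⟩

theorem filter_range_getD_wordOf {n i : ℕ} (s : List ℕ) (hi : i ≤ n) :
    {j ∈ range i | (wordOf n s).getD j true = false} = range i \ s.toFinset := by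
  ext j
  simp only [mem_filter, mem_range, mem_sdiff, List.mem_toFinset, and_congr_right_iff]
  intro hj
  rw [getD_wordOf s (by omega), decide_eq_false_iff_not]

end PartitionWord

open PartitionWord

theorem partition_01_sequence_bijection_general (n : ℕ) :
    ∃ f : {l : List ℕ // IsPartition l ∧ perim l = n} ≃
          {w : List Bool // w.length = n + 1 ∧ w.getD 0 true = false ∧ w.getD n false = true},
      ∀ l : {l : List ℕ // IsPartition l ∧ perim l = n},
        l.1.length =
          ((Finset.Icc 1 n).filter fun i => (f l).1.getD i false = true).card ∧
        repStat l.1 =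
          ((Finset.Icc 1 n).filter fun i =>
            (f l).1.getD i false = true ∧ (f l).1.getD (i - 1) false = true).card ∧
        evenStat l.1 =
          ((Finset.Icc 1 n).filter fun i =>
            (f l).1.getD i false = true ∧
              ((Finset.range i).filter fun j => (f l).1.getD j true = false).card % 2 = 0).card := by
  refine ⟨(partitionEquivBetaSet n).trans (betaSetEquivWord n), fun ⟨l, hl⟩ => ?_⟩
  have hs : IsBetaSet n (betaNumbers l) := isPartition_and_perim_eq_iff.1 hl
  have hle : ∀ i ∈ (betaNumbers l).toFinset, i ≤ n :=
    fun i hi => hs.2.2.2 i (List.mem_toFinset.1 hi)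
  have hword : (((partitionEquivBetaSet n).trans (betaSetEquivWord n)) ⟨l, hl⟩).1 =
    wordOf n (betaNumbers l) := rfl
  rw [hword, ← filter_filter, ← filter_filter, filter_Icc_getD_wordOf hs]
  refine ⟨(card_toFinset_betaNumbers hl.1.2.1.sortedGE).symm, ?_, ?_⟩
  · rw [repStat_eq_card_filter hl.1.2.1.sortedGE hl.1.2.2]
    congr 1
    refine filter_congr fun i hi => ?_
    rw [getD_wordOf _ (by have := hle i hi; omega), decide_eq_true_iff]
  · rw [evenStat_eq_card_filter hl.1.2.1.sortedGE]
    congr 1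
    exact filter_congr fun i hi => by rw [filter_range_getD_wordOf _ (hle i hi)]

theorem partition_01_sequence_bijection (n : ℕ) (hn : 1 ≤ n) :
    ∃ f : {l : List ℕ // IsPartition l ∧ perim l = n} ≃
          {w : List Bool // w.length = n + 1 ∧ w.getD 0 true = false ∧ w.getD n false = true},
      ∀ l : {l : List ℕ // IsPartition l ∧ perim l = n},
        l.1.length =
          ((Finset.Icc 1 n).filter fun i => (f l).1.getD i false = true).card ∧
        repStat l.1 =
          ((Finset.Icc 1 n).filter fun i =>
            (f l).1.getD i false = true ∧ (f l).1.getD (i - 1) false = true).card ∧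
        evenStat l.1 =
          ((Finset.Icc 1 n).filter fun i =>
            (f l).1.getD i false = true ∧
              ((Finset.range i).filter fun j => (f l).1.getD j true = false).card % 2 = 0).card :=
  partition_01_sequence_bijection_general n
end

section
/- The generating function Σ_λ p^{rep(λ)} x^{Γ(λ)}, summed over all nonempty integer partitions, equals x / (1 − (1+p)x − (1−p)x²), and the same holds with rep replaced by even. -/
/-!
Every partition of perimeter `n + 2` arises in exactly one way from a partition `λ` of perimeter
`n + 1`: either its largest part is repeated (`repeatHead λ`) or it is increased by one
(`succHead λ`). Both weights `w = p ^ rep` and `w = p ^ even` satisfy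
`w (repeatHead λ) + w (succHead λ) = p * w λ + w λ.tail`, so the sums `aₙ` of `w λ` and `bₙ` of
`w λ.tail` over perimeter `n` obey `aₙ₊₁ = p aₙ + bₙ`, `bₙ₊₁ = aₙ + bₙ`. Eliminating `b` gives
`aₙ₊₂ = (1 + p) aₙ₊₁ + (1 - p) aₙ` with `a₀ = 0`, `a₁ = 1`, which is the claimed rational generating
function.
-/

def repeatHead (l : List ℕ) : List ℕ := l.headI :: l

def succHead (l : List ℕ) : List ℕ := (l.headI + 1) :: l.tail

lemma isPartition_cons_iff_s8 {a : ℕ} {t : List ℕ} :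
    IsPartition (a :: t) ↔ (∀ x ∈ t, x ≤ a) ∧ t.Pairwise (· ≥ ·) ∧ 0 < a ∧ ∀ x ∈ t, 0 < x := by
  simp [IsPartition, List.pairwise_cons, and_assoc]

lemma isPartition_repeatHead {l : List ℕ} (hl : IsPartition l) : IsPartition (repeatHead l) := by
  obtain ⟨a, t, rfl⟩ := List.exists_cons_of_ne_nil hl.1
  obtain ⟨hle, hsort, ha, hpos⟩ := isPartition_cons_iff_s8.mp hl
  simp only [repeatHead, List.headI_cons, isPartition_cons_iff_s8, List.mem_cons, forall_eq_or_imp,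
    List.pairwise_cons]
  exact ⟨⟨le_rfl, hle⟩, ⟨hle, hsort⟩, ha, ha, hpos⟩

lemma isPartition_succHead {l : List ℕ} (hl : IsPartition l) : IsPartition (succHead l) := by
  obtain ⟨a, t, rfl⟩ := List.exists_cons_of_ne_nil hl.1
  obtain ⟨hle, hsort, -, hpos⟩ := isPartition_cons_iff_s8.mp hl
  exact isPartition_cons_iff_s8.mpr ⟨fun x hx => (hle x hx).trans a.le_succ, hsort, a.succ_pos, hpos⟩

lemma perim_repeatHead {l : List ℕ} (hl : l ≠ []) : perim (repeatHead l) = perim l + 1 := by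
  obtain ⟨a, t, rfl⟩ := List.exists_cons_of_ne_nil hl
  simp only [repeatHead, perim, List.headI_cons, List.length_cons]
  omega

lemma perim_succHead {l : List ℕ} (hl : l ≠ []) : perim (succHead l) = perim l + 1 := by
  obtain ⟨a, t, rfl⟩ := List.exists_cons_of_ne_nil hl
  simp only [succHead, perim, List.headI_cons, List.tail_cons, List.length_cons]
  omega

lemma repeatHead_ne_succHead {l l' : List ℕ} (hl : l ≠ []) (hl' : l'.Pairwise (· ≥ ·)) :
    repeatHead l ≠ succHead l' := by
  obtain ⟨a, t, rfl⟩ := List.exists_cons_of_ne_nil hl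
  cases l' with
  | nil => simp [repeatHead, succHead]
  | cons b u =>
    simp only [repeatHead, succHead, List.headI_cons, List.tail_cons]
    intro h
    injection h with hab htail
    subst hab htail
    have := (List.pairwise_cons.mp hl').1 _ List.mem_cons_self
    omega

lemma succHead_injOn : Set.InjOn succHead {l | l ≠ []} := by
  rintro (_ | ⟨a, t⟩) ha (_ | ⟨b, u⟩) hb h
  all_goals simp_all [succHead]

lemma IsPartition.of_cons {a : ℕ} {t : List ℕ} (h : IsPartition (a :: t)) (ht : t ≠ []) :
    IsPartition t :=
  ⟨ht, (isPartition_cons_iff_s8.mp h).2.1, (isPartition_cons_iff_s8.mp h).2.2.2⟩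

lemma IsPartition.exists_eq_repeatHead_or_succHead {l : List ℕ} (hl : IsPartition l)
    (h2 : 2 ≤ perim l) : ∃ l', IsPartition l' ∧ (l = repeatHead l' ∨ l = succHead l') := by
  match l, hl with
  | [a], hl =>
    simp only [perim, List.headI_cons, List.length_singleton] at h2
    refine ⟨[a - 1], isPartition_cons_iff_s8.mpr ⟨by simp, .nil, by omega, by simp⟩, Or.inr ?_⟩
    simp only [succHead, List.headI_cons, List.tail_cons, List.cons.injEq, and_true]
    omega
  | a :: b :: t, hl =>
    obtain ⟨hle, hsort, ha, hpos⟩ := isPartition_cons_iff_s8.mp hl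
    have hba : b ≤ a := hle b List.mem_cons_self
    rcases hba.eq_or_lt with rfl | hba
    · exact ⟨b :: t, hl.of_cons (List.cons_ne_nil _ _), Or.inl rfl⟩
    · have hb := hpos b List.mem_cons_self
      refine ⟨(a - 1) :: b :: t, isPartition_cons_iff_s8.mpr ⟨?_, hsort, by omega, hpos⟩, Or.inr ?_⟩
      · intro x hx
        have : x ≤ b := by
          rcases List.mem_cons.mp hx with rfl | hx
          · rfl
          · exact (List.pairwise_cons.mp hsort).1 x hx
        omega
      · simp only [succHead, List.headI_cons, List.tail_cons, List.cons.injEq, and_true]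
        omega

lemma perim_pos {l : List ℕ} (hl : IsPartition l) : 0 < perim l := by
  obtain ⟨a, t, rfl⟩ := List.exists_cons_of_ne_nil hl.1
  have := (isPartition_cons_iff_s8.mp hl).2.2.1
  simp only [perim, List.headI_cons, List.length_cons]
  omega

lemma perim_eq_one_iff {l : List ℕ} (hl : IsPartition l) : perim l = 1 ↔ l = [1] := by
  refine ⟨fun h => ?_, by rintro rfl; rfl⟩
  obtain ⟨a, t, rfl⟩ := List.exists_cons_of_ne_nil hl.1
  have := (isPartition_cons_iff_s8.mp hl).2.2.1
  cases t with
  | nil => simp_all [perim]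
  | cons b t => simp [perim] at h; omega

def perimFinset : ℕ → Finset (List ℕ)
  | 0 => ∅
  | 1 => {[1]}
  | n + 2 => (perimFinset (n + 1)).image repeatHead ∪ (perimFinset (n + 1)).image succHead

lemma coe_perimFinset (n : ℕ) :
    (perimFinset n : Set (List ℕ)) = {l | IsPartition l ∧ perim l = n} := by
  induction n using perimFinset.induct with
  | case1 =>
    ext l
    simpa [perimFinset] using fun hl => (perim_pos hl).ne'
  | case2 =>
    ext l
    simp only [perimFinset, Finset.coe_singleton, Set.mem_singleton_iff, Set.mem_ofPred_eq]
    refine ⟨?_, fun ⟨hl, h⟩ => (perim_eq_one_iff hl).mp h⟩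
    rintro rfl
    exact ⟨by simp [IsPartition], rfl⟩
  | case3 n ih =>
    ext l
    simp only [perimFinset, Finset.coe_union, Finset.coe_image, ih, Set.mem_union, Set.mem_image,
      Set.mem_ofPred_eq]
    constructor
    · rintro (⟨l', ⟨hl', hp⟩, rfl⟩ | ⟨l', ⟨hl', hp⟩, rfl⟩)
      · exact ⟨isPartition_repeatHead hl', by rw [perim_repeatHead hl'.1, hp]⟩
      · exact ⟨isPartition_succHead hl', by rw [perim_succHead hl'.1, hp]⟩
    · rintro ⟨hl, hperim⟩
      obtain ⟨l', hl', rfl | rfl⟩ := hl.exists_eq_repeatHead_or_succHead (by omega)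
      · exact Or.inl ⟨l', ⟨hl', by rw [perim_repeatHead hl'.1] at hperim; omega⟩, rfl⟩
      · exact Or.inr ⟨l', ⟨hl', by rw [perim_succHead hl'.1] at hperim; omega⟩, rfl⟩

lemma IsPartition.of_mem_perimFinset {n : ℕ} {l : List ℕ} (h : l ∈ perimFinset n) :
    IsPartition l := by
  rw [← Finset.mem_coe, coe_perimFinset] at h
  exact h.1

lemma sum_perimFinset_add_two {M : Type*} [AddCommMonoid M] (f : List ℕ → M) (n : ℕ) :
    ∑ l ∈ perimFinset (n + 2), f l =
      ∑ l ∈ perimFinset (n + 1), (f (repeatHead l) + f (succHead l)) := by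
  have hne {l} (h : l ∈ perimFinset (n + 1)) : l ≠ [] := (IsPartition.of_mem_perimFinset h).1
  rw [perimFinset, Finset.sum_union, Finset.sum_image, Finset.sum_image, Finset.sum_add_distrib]
  · exact fun l hl l' hl' h => succHead_injOn (hne hl) (hne hl') h
  · exact fun l _ l' _ h => congrArg List.tail h
  · simp only [Finset.disjoint_left, Finset.mem_image, not_exists, not_and]
    rintro _ ⟨l, hl, rfl⟩ l' hl'
    exact (repeatHead_ne_succHead (hne hl) (IsPartition.of_mem_perimFinset hl').2.1).symm

theorem PowerSeries.mk_mul_eq_X_of_recurrence {R : Type*} [CommRing R] (c d : R) (a : ℕ → R)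
    (h0 : a 0 = 0) (h1 : a 1 = 1) (h : ∀ n, a (n + 2) = c * a (n + 1) + d * a n) :
    mk a * (1 - C c * X - C d * X ^ 2) = X := by
  rw [show mk a * (1 - C c * X - C d * X ^ 2) = mk a - C c * (mk a * X) - C d * (mk a * X ^ 2) by
    ring]
  ext n
  rcases n with _ | _ | n
  · simp [h0]
  · simp [coeff_succ_mul_X, coeff_mul_X_pow', h0, h1]
  · simp [coeff_succ_mul_X, coeff_mul_X_pow', h, coeff_X]

section Recurrence

variable {R : Type*} [CommRing R] (p : R) (wt : List ℕ → R)

theorem sum_perimFinset_recurrence (h_nil : wt [] = 1) (h_one : wt [1] = 1)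
    (h_step : ∀ l, IsPartition l → wt (repeatHead l) + wt (succHead l) = p * wt l + wt l.tail)
    (n : ℕ) :
    ∑ l ∈ perimFinset (n + 2), wt l =
      (1 + p) * ∑ l ∈ perimFinset (n + 1), wt l + (1 - p) * ∑ l ∈ perimFinset n, wt l := by
  have heads (n : ℕ) : ∑ l ∈ perimFinset (n + 2), wt l =
      p * ∑ l ∈ perimFinset (n + 1), wt l + ∑ l ∈ perimFinset (n + 1), wt l.tail := by
    rw [sum_perimFinset_add_two, Finset.mul_sum, ← Finset.sum_add_distrib]
    exact Finset.sum_congr rfl fun l hl => h_step l (IsPartition.of_mem_perimFinset hl)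
  have tails (n : ℕ) : ∑ l ∈ perimFinset (n + 2), wt l.tail =
      ∑ l ∈ perimFinset (n + 1), wt l + ∑ l ∈ perimFinset (n + 1), wt l.tail := by
    rw [sum_perimFinset_add_two, Finset.sum_add_distrib]
    rfl
  cases n with
  | zero => rw [heads 0]; simp [perimFinset, h_nil, h_one, add_comm]
  | succ n => linear_combination heads (n + 1) + tails n - heads n

theorem mk_finsum_perim_mul_eq_X (h_nil : wt [] = 1) (h_one : wt [1] = 1)
    (h_step : ∀ l, IsPartition l → wt (repeatHead l) + wt (succHead l) = p * wt l + wt l.tail) :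
    PowerSeries.mk (fun n => ∑ᶠ l ∈ {l | IsPartition l ∧ perim l = n}, wt l) *
      (1 - PowerSeries.C (1 + p) * PowerSeries.X - PowerSeries.C (1 - p) * PowerSeries.X ^ 2) =
      PowerSeries.X := by
  simp_rw [← coe_perimFinset, finsum_mem_coe_finset]
  exact PowerSeries.mk_mul_eq_X_of_recurrence _ _ _ (by simp [perimFinset])
    (by simp [perimFinset, h_one]) (sum_perimFinset_recurrence p wt h_nil h_one h_step)

end Recurrence

lemma repStat_cons_cons (a b : ℕ) (t : List ℕ) :
    repStat (a :: b :: t) = repStat (b :: t) + if a = b then 1 else 0 := by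
  simp only [repStat, List.length_cons, Nat.add_sub_cancel, List.range_succ_eq_map,
    List.filter_cons, List.filter_map, List.getD_cons_zero, List.getD_cons_succ]
  split <;> simp_all [Function.comp_def, add_comm]

lemma repStat_repeatHead {l : List ℕ} (hl : l ≠ []) : repStat (repeatHead l) = repStat l + 1 := by
  obtain ⟨a, t, rfl⟩ := List.exists_cons_of_ne_nil hl
  simp [repeatHead, repStat_cons_cons]

lemma repStat_succHead {l : List ℕ} (hl : l.Pairwise (· ≥ ·)) :
    repStat (succHead l) = repStat l.tail := by
  match l, hl with
  | [], _ => rfl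
  | [a], _ => rfl
  | a :: b :: t, hl =>
    have hba : b ≤ a := (List.pairwise_cons.mp hl).1 b List.mem_cons_self
    rw [succHead, List.headI_cons, List.tail_cons, repStat_cons_cons, if_neg (by omega), add_zero]

lemma evenStat_cons (a : ℕ) (t : List ℕ) :
    evenStat (a :: t) = evenStat t + if a % 2 = 0 then 1 else 0 := by
  simp [evenStat, List.countP_cons]

section Weights

variable {R : Type*} [CommSemiring R] (p : R)

lemma pow_repStat_repeatHead_add_succHead {l : List ℕ} (hl : IsPartition l) :
    p ^ repStat (repeatHead l) + p ^ repStat (succHead l) =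
      p * p ^ repStat l + p ^ repStat l.tail := by
  rw [repStat_repeatHead hl.1, repStat_succHead hl.2.1, pow_succ', mul_comm]

lemma pow_evenStat_repeatHead_add_succHead {l : List ℕ} (hl : IsPartition l) :
    p ^ evenStat (repeatHead l) + p ^ evenStat (succHead l) =
      p * p ^ evenStat l + p ^ evenStat l.tail := by
  obtain ⟨a, t, rfl⟩ := List.exists_cons_of_ne_nil hl.1
  simp only [repeatHead, succHead, List.headI_cons, List.tail_cons, evenStat_cons]
  rcases Nat.mod_two_eq_zero_or_one a with ha | ha
  · rw [if_pos ha, if_neg (by omega)]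
    ring
  · rw [if_neg (by omega), if_pos (by omega)]
    ring

end Weights

theorem gen_fun_rep_and_even :
    letI p : Polynomial ℤ := Polynomial.X
    ((PowerSeries.mk fun n =>
        ∑ᶠ l ∈ {l : List ℕ | IsPartition l ∧ perim l = n}, p ^ repStat l) *
      (1 - PowerSeries.C (1 + p) * PowerSeries.X
         - PowerSeries.C (1 - p) * PowerSeries.X ^ 2) = PowerSeries.X) ∧
    ((PowerSeries.mk fun n =>
        ∑ᶠ l ∈ {l : List ℕ | IsPartition l ∧ perim l = n}, p ^ evenStat l) *
      (1 - PowerSeries.C (1 + p) * PowerSeries.X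
         - PowerSeries.C (1 - p) * PowerSeries.X ^ 2) = PowerSeries.X) :=
  ⟨mk_finsum_perim_mul_eq_X _ _ (by simp [repStat]) (by simp [repStat])
      fun _ hl => pow_repStat_repeatHead_add_succHead _ hl,
    mk_finsum_perim_mul_eq_X _ _ (by simp [evenStat]) (by simp [evenStat])
      fun _ hl => pow_evenStat_repeatHead_add_succHead _ hl⟩
end

section
/- For every integer n ≥ 3, the number of partitions with perimeter n having an even number of parts equals the number of partitions with perimeter n having an odd number of parts, i.e. Σ_{λ ∈ H_n} (−1)^{ℓ(λ)} = 0; equivalently, h_n(1) = 0 for n ≥ 3, where h_n(p) = Σ_{Γ(λ)=n} (−1)^{ℓ(λ)} p^{rep(λ)}. -/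
/-- The parity-flipping involution on partitions of fixed perimeter. -/
def phi : List ℕ → List ℕ
  | [] => []
  | [a] => [a - 1, a - 1]
  | a :: b :: t => if a = b then (a + 1) :: t else (a - 1) :: (a - 1) :: b :: t

lemma phi_props {n : ℕ} (hn : 3 ≤ n) {l : List ℕ} (hl : IsPartition l) (hp : perim l = n) :
    IsPartition (phi l) ∧ perim (phi l) = n ∧ phi (phi l) = l ∧
      ((phi l).length = l.length + 1 ∨ l.length = (phi l).length + 1) := by
  obtain ⟨hne, hsort, hpos⟩ := hl
  match l with
  | [] => exact absurd rfl hne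
  | [a] =>
    have ha : a = n := by simp [perim] at hp; omega
    have h3 : 3 ≤ a := ha ▸ hn
    refine ⟨⟨by simp [phi], ?_, ?_⟩, ?_, ?_, ?_⟩
    · simp [phi, List.Pairwise]
    · intro x hx; simp [phi] at hx; omega
    · simp [phi, perim]; omega
    · simp [phi]; omega
    · simp [phi]
  | a :: b :: t =>
    have hab : b ≤ a := by
      have := List.rel_of_pairwise_cons hsort (a' := b) (by simp)
      exact this
    have hbpos : 0 < b := hpos b (by simp)
    have hsort' : (b :: t).Pairwise (· ≥ ·) := hsort.of_cons
    have htle : ∀ x ∈ t, x ≤ b := fun x hx => List.rel_of_pairwise_cons hsort' (a' := x) hx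
    by_cases h : a = b
    · -- merge case: (a+1) :: t
      subst h
      have hphi : phi (a :: a :: t) = (a + 1) :: t := by simp [phi]
      refine ⟨⟨by simp [hphi], ?_, ?_⟩, ?_, ?_, ?_⟩
      · rw [hphi]
        exact List.pairwise_cons.2 ⟨fun x hx => by have := htle x hx; omega, hsort'.of_cons⟩
      · intro x hx; rw [hphi] at hx
        rcases List.mem_cons.1 hx with h1 | h2
        · omega
        · exact hpos x (by simp [h2])
      · rw [hphi]; simp [perim] at hp ⊢; omega
      · rw [hphi]
        match t with
        | [] => simp [phi]
        | c :: t' =>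
          have hca : c ≤ a := htle c (by simp)
          have hnc : ¬ (a + 1 = c) := by omega
          simp only [phi, if_neg hnc]
          simp
      · rw [hphi]; simp
    · -- split case: (a-1) :: (a-1) :: b :: t
      have hba : b < a := lt_of_le_of_ne hab (fun hh => h hh.symm)
      have hphi : phi (a :: b :: t) = (a - 1) :: (a - 1) :: b :: t := by simp [phi, h]
      refine ⟨⟨by simp [hphi], ?_, ?_⟩, ?_, ?_, ?_⟩
      · rw [hphi]
        refine List.pairwise_cons.2 ⟨?_, List.pairwise_cons.2 ⟨?_, hsort'⟩⟩
        · intro x hx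
          rcases List.mem_cons.1 hx with h1 | h2
          · omega
          · have : x ≤ b := by
              rcases List.mem_cons.1 h2 with h3 | h4
              · omega
              · exact htle x h4
            omega
        · intro x hx
          rcases List.mem_cons.1 hx with h1 | h2
          · omega
          · have := htle x h2; omega
      · intro x hx; rw [hphi] at hx
        rcases List.mem_cons.1 hx with h1 | h2
        · omega
        · rcases List.mem_cons.1 h2 with h3 | h4
          · omega
          · exact hpos x (by simp [h4])
      · rw [hphi]; simp [perim] at hp ⊢; omega
      · rw [hphi]; simp [phi]; omega
      · rw [hphi]; simp

theorem even_odd_length_balance (n : ℕ) (hn : 3 ≤ n) :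
    {l : List ℕ | IsPartition l ∧ perim l = n ∧ Even l.length}.ncard =
      {l : List ℕ | IsPartition l ∧ perim l = n ∧ ¬ Even l.length}.ncard ∧
    ∑ᶠ l ∈ {l : List ℕ | IsPartition l ∧ perim l = n}, ((-1 : ℤ) ^ l.length) = 0 := by
  set S : Set (List ℕ) := {l | IsPartition l ∧ perim l = n} with hS
  set SE : Set (List ℕ) := {l | IsPartition l ∧ perim l = n ∧ Even l.length} with hSE
  set SO : Set (List ℕ) := {l | IsPartition l ∧ perim l = n ∧ ¬ Even l.length} with hSO
  -- basic bounds on members of S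
  have hbound : ∀ l ∈ S, l.length ≤ n ∧ ∀ x ∈ l, x ≤ n := by
    rintro l ⟨⟨hne, hsort, hpos⟩, hp⟩
    match l with
    | [] => exact absurd rfl hne
    | a :: t =>
      have ha : 0 < a := hpos a (by simp)
      simp [perim] at hp
      constructor
      · simp; omega
      · intro x hx
        rcases List.mem_cons.1 hx with h1 | h2
        · omega
        · have := List.rel_of_pairwise_cons hsort (a' := x) h2; omega
  -- finiteness of S
  have hfin : S.Finite := by
    have h1 : {l : List (Fin (n + 1)) | l.length ≤ n}.Finite := List.finite_length_le _ n
    have h2 : ((fun l : List (Fin (n+1)) => l.map Fin.val) '' {l | l.length ≤ n}).Finite :=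
      h1.image _
    refine h2.subset ?_
    intro l hl
    obtain ⟨hlen, hle⟩ := hbound l hl
    refine ⟨l.pmap (fun x h => (⟨x, h⟩ : Fin (n+1))) (fun x hx => by have := hle x hx; omega), ?_, ?_⟩
    · simpa using hlen
    · simp [List.map_pmap, List.pmap_eq_map]
  -- the involution properties
  have key : ∀ l ∈ S, phi l ∈ S ∧ phi (phi l) = l ∧
      ((phi l).length = l.length + 1 ∨ l.length = (phi l).length + 1) := by
    rintro l ⟨hl, hp⟩
    obtain ⟨h1, h2, h3, h4⟩ := phi_props hn hl hp
    exact ⟨⟨h1, h2⟩, h3, h4⟩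
  have himg : phi '' SE = SO := by
    apply Set.Subset.antisymm
    · rintro _ ⟨l, ⟨hl1, hl2, hl3⟩, rfl⟩
      obtain ⟨⟨m1, m2⟩, _, m4⟩ := key l ⟨hl1, hl2⟩
      refine ⟨m1, m2, ?_⟩
      rcases m4 with h | h <;> [skip; skip] <;>
        · rcases hl3 with ⟨k, hk⟩
          simp [Nat.even_iff] at *; omega
    · rintro m ⟨hm1, hm2, hm3⟩
      obtain ⟨⟨p1, p2⟩, p3, p4⟩ := key m ⟨hm1, hm2⟩
      refine ⟨phi m, ⟨p1, p2, ?_⟩, p3⟩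
      rcases p4 with h | h <;> (simp [Nat.even_iff] at *; omega)
  have hinj : Set.InjOn phi SE := by
    intro x hx y hy hxy
    have hx' := (key x ⟨hx.1, hx.2.1⟩).2.1
    have hy' := (key y ⟨hy.1, hy.2.1⟩).2.1
    rw [← hx', ← hy', hxy]
  have hcard : SE.ncard = SO.ncard := by
    rw [← himg, Set.ncard_image_of_injOn hinj]
  refine ⟨hcard, ?_⟩
  -- now the sum
  classical
  have hcoe : S = ↑hfin.toFinset := (Set.Finite.coe_toFinset hfin).symm
  rw [hcoe, finsum_mem_coe_finset]
  have hsplit := Finset.sum_filter_add_sum_filter_not hfin.toFinset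
    (fun l => Even l.length) (fun l => ((-1 : ℤ) ^ l.length))
  have hE : (hfin.toFinset.filter fun l => Even l.length) = hfin.toFinset.filter
      (fun l => Even l.length) := rfl
  have hSEfin : SE = ↑(hfin.toFinset.filter fun l => Even l.length) := by
    ext l; simp [hSE, hS, Set.Finite.mem_toFinset, and_assoc]
  have hSOfin : SO = ↑(hfin.toFinset.filter fun l => ¬ Even l.length) := by
    ext l; simp [hSO, hS, Set.Finite.mem_toFinset, and_assoc]
  have c1 : SE.ncard = (hfin.toFinset.filter fun l => Even l.length).card := by
    rw [hSEfin, Set.ncard_coe_finset]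
  have c2 : SO.ncard = (hfin.toFinset.filter fun l => ¬ Even l.length).card := by
    rw [hSOfin, Set.ncard_coe_finset]
  have s1 : ∑ l ∈ hfin.toFinset.filter (fun l => Even l.length), ((-1 : ℤ) ^ l.length)
      = (hfin.toFinset.filter fun l => Even l.length).card := by
    rw [Finset.sum_congr rfl (fun l hl => (Finset.mem_filter.1 hl).2.neg_one_pow)]
    simp
  have s2 : ∑ l ∈ hfin.toFinset.filter (fun l => ¬ Even l.length), ((-1 : ℤ) ^ l.length)
      = -(hfin.toFinset.filter fun l => ¬ Even l.length).card := by
    rw [Finset.sum_congr rfl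
      (fun l hl => (Nat.not_even_iff_odd.1 (Finset.mem_filter.1 hl).2).neg_one_pow)]
    simp
  rw [← hsplit, s1, s2, ← c1, ← c2, hcard]
  ring
end
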